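/- arXiv:2509.21568 — 3 statements merged into one kernel-verified Lean document; each statement's English description precedes it below -/
import Mathlib

section
/- Every connected plane multigraph in which all vertices have degree 4 except two vertices of degree 1 admits a trail: a walk traversing every edge exactly once that never crosses itself at a degree-4 vertex (at each degree-4 vertex, the two passages of the walk through that vertex pair up the four incident half-edges into two non-crossing pairs). -/
/-- Number of orbits of a function on a type (used to count vertices/faces of a
combinatorial map). -/
noncomputable def orbCount {D : Type} (f : D → D) : ℕ := Nat.card (Quot (fun a b => f a = b))

/-- A 1-linkoid universe, encoded as a planar combinatorial map on darts (half-edges):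
`σ` is the rotation at vertices (4-cycles at crossings, fixed points at the two
degree-1 endpoints), `α` the edge involution, `col` an alternating checkerboard
colouring of the darts around each crossing, `conn` connectivity, and `euler`
Euler's formula V + F = E + 2 (planarity). -/
structure LinkoidUniverse where
  D : Type
  [finD : Fintype D]
  [decD : DecidableEq D]
  σ : Equiv.Perm D
  α : D → D
  α_invol : Function.Involutive α
  α_ne : ∀ d, α d ≠ d
  col : D → Bool
  col_alt : ∀ d, σ d ≠ d → col (σ d) = ! col d
  tail : D
  head : D
  tail_ne_head : tail ≠ head
  σ_tail : σ tail = tail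
  σ_head : σ head = head
  endpoints_only : ∀ d, σ d = d → d = tail ∨ d = head
  deg4 : ∀ d, σ d ≠ d → (σ ^ 4) d = d ∧ (σ ^ 2) d ≠ d
  conn : ∀ e e' : D, Relation.EqvGen (fun a c => α a = c ∨ σ a = c) e e'
  euler : orbCount (⇑σ) + orbCount (⇑σ ∘ α) = Fintype.card D / 2 + 2

attribute [instance] LinkoidUniverse.finD LinkoidUniverse.decD

namespace LinkoidUniverse

variable (U : LinkoidUniverse)

/-- Vertices are σ-orbits of darts. -/
def Vertex := Quot (fun a b : U.D => U.σ a = b)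
/-- Faces are orbits of the face permutation σ ∘ α. -/
def Face := Quot (fun a b : U.D => U.σ (U.α a) = b)
def vertexOf (d : U.D) : U.Vertex := Quot.mk _ d
def faceOf (d : U.D) : U.Face := Quot.mk _ d
/-- A dart lying at a degree-4 vertex (crossing). -/
def IsCrossingDart (d : U.D) : Prop := U.σ d ≠ d
/-- Crossings: vertices other than the two endpoints. -/
def Crossing := {v : U.Vertex // v ≠ U.vertexOf U.tail ∧ v ≠ U.vertexOf U.head}
/-- Incidence of a face and a vertex (they share a corner dart). -/
def Incident (f : U.Face) (v : U.Vertex) : Prop :=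
  ∃ d, U.faceOf d = f ∧ U.vertexOf d = v

/-- A smoothing choice, one Bool per crossing (so constant on σ-cycles). -/
def ConstOnCycles (b : U.D → Bool) : Prop := ∀ d, b (U.σ d) = b d
/-- The strand-transition map through the smoothed crossings determined by `b`. -/
def trans (b : U.D → Bool) : U.D → U.D :=
  fun e => if U.col e = b e then U.σ e else U.σ.symm e
/-- The diagram with all crossings smoothed according to `b` is connected. -/
def SmoothedConnected (b : U.D → Bool) : Prop :=
  ∀ e e' : U.D, Relation.EqvGen (fun a c => U.α a = c ∨ U.trans b a = c) e e'

/-- A trail: a non-crossing smoothing of every crossing whose result is a single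
connected (hence simple) arc from tail to head. -/
structure Trail where
  b : U.D → Bool
  const : U.ConstOnCycles b
  norm : ∀ d, U.σ d = d → b d = false
  conn : U.SmoothedConnected b

open Classical in
/-- Transition map when only the single crossing containing the dart `d0` is smoothed,
in direction `b0`. -/
noncomputable def transOne (d0 : U.D) (b0 : Bool) : U.D → U.D := fun e =>
  if U.σ.SameCycle d0 e ∧ U.σ e ≠ e then
    (if U.col e = b0 then U.σ e else U.σ.symm e) else U.σ e

/-- Connectivity of the diagram after smoothing only the crossing of `d0` in
direction `b0`. -/
def ConnectedOne (d0 : U.D) (b0 : Bool) : Prop :=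
  ∀ e e' : U.D, Relation.EqvGen (fun a c => U.α a = c ∨ U.transOne d0 b0 a = c) e e'

/-- A nugatory crossing: exactly one of its two smoothings keeps the diagram connected. -/
def Nugatory (d0 : U.D) : Prop := Xor' (U.ConnectedOne d0 true) (U.ConnectedOne d0 false)

/-- The (unordered) pair of faces merged when the crossing `v` is smoothed according
to `b`. -/
def MergesAt (b : U.D → Bool) (v : U.Vertex) (f g : U.Face) : Prop :=
  ∃ d, U.vertexOf d = v ∧ U.σ d ≠ d ∧
    (if b d then ({f, g} : Set U.Face) = {U.faceOf d, U.faceOf ((U.σ ^ 2) d)}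
     else ({f, g} : Set U.Face) = {U.faceOf (U.σ d), U.faceOf ((U.σ ^ 3) d)})

/-- The set of crossings at which two smoothing choices differ. -/
def diffSet (b b' : U.D → Bool) : Set U.Vertex :=
  {v | ∃ d, U.vertexOf d = v ∧ b d ≠ b' d}

end LinkoidUniverse

/-- A starred 1-linkoid universe: the star sits in the face of the dart `star`,
which is the unbounded face. -/
structure StarredLinkoid extends LinkoidUniverse where
  star : D

namespace StarredLinkoid

variable (U : StarredLinkoid)

def outerFace : U.Face := U.faceOf U.star
/-- Bounded faces. -/
def BFace := {f : U.Face // f ≠ U.outerFace}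
/-- A clock state: a bijective assignment of each bounded face to an incident crossing
(the marker of the face). -/
def ClockState :=
  { m : U.BFace → U.Crossing // Function.Bijective m ∧ ∀ f, U.Incident f.1 (m f).1 }

end StarredLinkoid

/-- A starred 1-linkoid universe together with its clockwise and counterclockwise
clock-move relations on clock states (a clock move rotates a pair of markers in
faces sharing a boundary edge, or the head-adjacent marker, by 90 degrees). -/
structure ClockSystem extends StarredLinkoid where
  CW : toStarredLinkoid.ClockState → toStarredLinkoid.ClockState → Prop
  CCW : toStarredLinkoid.ClockState → toStarredLinkoid.ClockState → Prop
  cw_ccw : ∀ s t, CW s t ↔ CCW t s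

namespace ClockSystem

variable (C : ClockSystem)

/-- A clocked state: admits only clockwise clock moves. -/
def IsClocked (s : C.ClockState) : Prop := ∀ t, ¬ C.CCW s t
/-- A counter-clocked state: admits only counterclockwise clock moves. -/
def IsCounterClocked (s : C.ClockState) : Prop := ∀ t, ¬ C.CW s t

end ClockSystem


section AuxEven

lemma even_card_of_invol {D : Type} [DecidableEq D] (s : Finset D) (j : D → D)
    (hmem : ∀ d ∈ s, j d ∈ s) (hj : ∀ d ∈ s, j (j d) = d) (hne : ∀ d ∈ s, j d ≠ d) :
    Even s.card := by
  classical
  induction s using Finset.strongInduction with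
  | _ s ih =>
    rcases s.eq_empty_or_nonempty with rfl | ⟨a, ha⟩
    · simp
    · have hja : j a ∈ s := hmem a ha
      have hjane : j a ≠ a := hne a ha
      set s' := (s.erase a).erase (j a) with hs'
      have hsub : s' ⊆ s := (Finset.erase_subset _ _).trans (Finset.erase_subset _ _)
      have hssub : s' ⊂ s := by
        refine Finset.ssubset_iff_of_subset hsub |>.mpr ⟨a, ha, ?_⟩
        simp [hs', hjane.symm]
      have hmem' : ∀ d ∈ s', j d ∈ s' := by
        intro d hd
        have hds : d ∈ s := hsub hd
        have h1 : d ≠ j a := Finset.ne_of_mem_erase hd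
        have h2 : d ≠ a := Finset.ne_of_mem_erase (Finset.mem_of_mem_erase hd)
        simp only [hs', Finset.mem_erase]
        refine ⟨fun h => h2 ?_, fun h => h1 ?_, hmem d hds⟩
        · rw [← hj d hds, h, hj a ha]
        · rw [← hj d hds, h]
      have hcard : s.card = s'.card + 2 := by
        have h1 : (s.erase a).card = s.card - 1 := Finset.card_erase_of_mem ha
        have h2 : s'.card = (s.erase a).card - 1 :=
          Finset.card_erase_of_mem (Finset.mem_erase.mpr ⟨hjane, hja⟩)
        have h3 : 1 < s.card := Finset.one_lt_card.mpr ⟨a, ha, j a, hja, hjane.symm⟩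
        omega
      have hev := ih s' hssub hmem' (fun d hd => hj d (hsub hd)) (fun d hd => hne d (hsub hd))
      rw [hcard]
      exact hev.add even_two

lemma even_filter_fixed {D : Type} [Fintype D] [DecidableEq D]
    (r : D → D → Prop) [DecidableRel r]
    (hsymm : ∀ {a b}, r a b → r b a) (htrans : ∀ {a b c}, r a b → r b c → r a c)
    (j k : D → D) (hj : Function.Involutive j) (hjne : ∀ d, j d ≠ d) (hjr : ∀ d, r d (j d))
    (hk : Function.Involutive k) (hkr : ∀ d, r d (k d)) (a : D) :
    Even (Finset.univ.filter (fun d => r a d ∧ k d = d)).card := by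
  have hA : Even (Finset.univ.filter (fun d => r a d)).card := by
    refine even_card_of_invol _ j ?_ (fun d _ => hj d) (fun d _ => hjne d)
    intro d hd
    simp only [Finset.mem_filter, Finset.mem_univ, true_and] at *
    exact htrans hd (hjr d)
  have hN : Even (Finset.univ.filter (fun d => r a d ∧ ¬ k d = d)).card := by
    refine even_card_of_invol _ k ?_ (fun d _ => hk d) ?_
    · intro d hd
      simp only [Finset.mem_filter, Finset.mem_univ, true_and] at *
      exact ⟨htrans hd.1 (hkr d), fun h => hd.2 (hk.injective h)⟩
    · intro d hd
      simp only [Finset.mem_filter, Finset.mem_univ, true_and] at hd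
      exact hd.2
  have hsplit : (Finset.univ.filter (fun d => r a d ∧ k d = d)).card
      + (Finset.univ.filter (fun d => r a d ∧ ¬ k d = d)).card
      = (Finset.univ.filter (fun d => r a d)).card := by
    rw [← Finset.filter_filter, ← Finset.filter_filter]
    exact Finset.card_filter_add_card_filter_not _
  rw [← hsplit] at hA
  exact (Nat.even_add.mp hA).mpr hN

end AuxEven

namespace Relation.EqvGen

theorem trans' {α : Type} {r : α → α → Prop} {a b c : α}
    (h1 : Relation.EqvGen r a b) (h2 : Relation.EqvGen r b c) : Relation.EqvGen r a c :=
  Relation.EqvGen.trans a b c h1 h2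

theorem symm' {α : Type} {r : α → α → Prop} {a b : α}
    (h : Relation.EqvGen r a b) : Relation.EqvGen r b a :=
  Relation.EqvGen.symm a b h

end Relation.EqvGen

namespace LinkoidUniverse

variable (U : LinkoidUniverse)

/-- Partial-smoothing transition map: darts in `S` are smoothed according to `bb`,
darts outside `S` still turn by `σ`. -/
def transB (S bb : U.D → Bool) : U.D → U.D :=
  fun e => if S e then (if U.col e = bb e then U.σ e else U.σ.symm e) else U.σ e

/-- Connectivity of the 1-complex with transitions `f` and edge involution `α`. -/
def ConnF (f : U.D → U.D) : Prop :=
  ∀ e e' : U.D, Relation.EqvGen (fun a c => U.α a = c ∨ f a = c) e e'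

/-- The σ-cycle of a crossing dart `x`. -/
def Cyc (x d : U.D) : Prop :=
  d = x ∨ d = U.σ x ∨ d = U.σ (U.σ x) ∨ d = U.σ (U.σ (U.σ x))

instance (x d : U.D) : Decidable (U.Cyc x d) := by unfold Cyc; infer_instance

lemma sigma_pow4 (x : U.D) (hx : U.σ x ≠ x) : U.σ (U.σ (U.σ (U.σ x))) = x := by
  simpa [pow_succ, Equiv.Perm.mul_apply] using (U.deg4 x hx).1

lemma sigma_pow2_ne (x : U.D) (hx : U.σ x ≠ x) : U.σ (U.σ x) ≠ x := by
  simpa [pow_succ, Equiv.Perm.mul_apply] using (U.deg4 x hx).2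

lemma cyc_sigma (x : U.D) (hx : U.σ x ≠ x) (d : U.D) : U.Cyc x (U.σ d) ↔ U.Cyc x d := by
  have hinj := U.σ.injective
  unfold Cyc
  constructor
  · rintro (h | h | h | h)
    · exact Or.inr (Or.inr (Or.inr (hinj (h.trans (U.sigma_pow4 x hx).symm))))
    · exact Or.inl (hinj h)
    · exact Or.inr (Or.inl (hinj h))
    · exact Or.inr (Or.inr (Or.inl (hinj h)))
  · rintro (rfl | rfl | rfl | rfl)
    · exact Or.inr (Or.inl rfl)
    · exact Or.inr (Or.inr (Or.inl rfl))
    · exact Or.inr (Or.inr (Or.inr rfl))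
    · exact Or.inl (U.sigma_pow4 x hx)

lemma cyc_symm (x : U.D) (hx : U.σ x ≠ x) (d : U.D) :
    U.Cyc x (U.σ.symm d) ↔ U.Cyc x d := by
  rw [← U.cyc_sigma x hx (U.σ.symm d), Equiv.apply_symm_apply]

lemma symm_ne (d : U.D) (hd : U.σ d ≠ d) : U.σ.symm d ≠ d := by
  intro hh
  apply hd
  conv_lhs => rw [← hh]
  exact U.σ.apply_symm_apply d

lemma key (S bb : U.D → Bool) (hSσ : ∀ d, S (U.σ d) = S d) (hb : ∀ d, bb (U.σ d) = bb d)
    (hconn : U.ConnF (U.transB S bb)) (x : U.D) (hx : U.σ x ≠ x) (hxS : S x = false) :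
    ∃ c : Bool, U.ConnF (U.transB (fun d => S d || decide (U.Cyc x d))
      (fun d => if U.Cyc x d then c else bb d)) := by
  classical
  by_contra hcon
  push_neg at hcon
  have hinj := U.σ.injective
  set x1 := U.σ x with hx1
  set x2 := U.σ x1 with hx2
  set x3 := U.σ x2 with hx3
  have hσx : U.σ x = x1 := rfl
  have hσx1 : U.σ x1 = x2 := rfl
  have hσx2 : U.σ x2 = x3 := rfl
  have hσx3 : U.σ x3 = x := by rw [hx3, hx2, hx1]; exact U.sigma_pow4 x hx
  have cyc_iff : ∀ d, U.Cyc x d ↔ (d = x ∨ d = x1 ∨ d = x2 ∨ d = x3) := by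
    intro d; unfold Cyc; rw [← hx1, ← hx2, ← hx3]
  have cyc0 : U.Cyc x x := Or.inl rfl
  have cyc1 : U.Cyc x x1 := (cyc_iff x1).mpr (Or.inr (Or.inl rfl))
  have cyc2 : U.Cyc x x2 := (cyc_iff x2).mpr (Or.inr (Or.inr (Or.inl rfl)))
  have cyc3 : U.Cyc x x3 := (cyc_iff x3).mpr (Or.inr (Or.inr (Or.inr rfl)))
  have hx1ne : U.σ x1 ≠ x1 := by rw [hx1]; exact fun h => hx (hinj h)
  have hx2ne : U.σ x2 ≠ x2 := by rw [hx2]; exact fun h => hx1ne (hinj h)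
  have hsymx : U.σ.symm x = x3 := by rw [Equiv.symm_apply_eq, hσx3]
  -- distinctness
  have n10 : x1 ≠ x := by rw [hx1]; exact hx
  have n20 : x2 ≠ x := by rw [hx2, hx1]; exact U.sigma_pow2_ne x hx
  have n30 : x3 ≠ x := by
    intro h
    have h' := hσx3
    rw [h] at h'
    exact hx h'
  have n21 : x2 ≠ x1 := fun h => hx1ne (hσx1.trans h)
  have n31 : x3 ≠ x1 := by
    intro h
    have h' := hσx3
    rw [h] at h'
    exact n20 (hσx1.symm.trans h')
  have n32 : x3 ≠ x2 := fun h => hx2ne (hσx2.trans h)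
  -- colours
  have c01 : U.col x1 = !U.col x := by rw [hx1]; exact U.col_alt x hx
  have c12 : U.col x2 = !U.col x1 := by rw [hx2]; exact U.col_alt x1 hx1ne
  have c2 : U.col x2 = U.col x := by rw [c12, c01, Bool.not_not]
  -- S on the cycle
  have hS1 : S x1 = false := by rw [hx1, hSσ]; exact hxS
  have hS2 : S x2 = false := by rw [hx2, hSσ]; exact hS1
  have hS3 : S x3 = false := by rw [hx3, hSσ]; exact hS2
  have hSc : ∀ d, U.Cyc x d → S d = false := by
    intro d hd
    rcases (cyc_iff d).mp hd with rfl | rfl | rfl | rfl <;> assumption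
  have hSsymm : ∀ d, S (U.σ.symm d) = S d := by
    intro d; rw [← hSσ (U.σ.symm d), Equiv.apply_symm_apply]
  have hbsymm : ∀ d, bb (U.σ.symm d) = bb d := by
    intro d; rw [← hb (U.σ.symm d), Equiv.apply_symm_apply]
  -- the common (cut-open) relation r0 and its equivalence closure
  set r0 : U.D → U.D → Prop :=
    fun a c => U.α a = c ∨ (¬ U.Cyc x a ∧ U.transB S bb a = c) with hr0def
  have tB_noS : ∀ d, S d = false → U.transB S bb d = U.σ d := by
    intro d h; simp only [transB]; rw [h]; simp
  -- reachability of the cycle darts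
  have cycReach : ∀ e, U.Cyc x e →
      (Relation.EqvGen r0 e x ∨ Relation.EqvGen r0 e x1 ∨
        Relation.EqvGen r0 e x2 ∨ Relation.EqvGen r0 e x3) := by
    intro e he
    rcases (cyc_iff e).mp he with rfl | rfl | rfl | rfl
    · exact Or.inl (Relation.EqvGen.refl _)
    · exact Or.inr (Or.inl (Relation.EqvGen.refl _))
    · exact Or.inr (Or.inr (Or.inl (Relation.EqvGen.refl _)))
    · exact Or.inr (Or.inr (Or.inr (Relation.EqvGen.refl _)))
  have reachT : ∀ {a b2 : U.D}, Relation.EqvGen r0 a b2 →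
      (Relation.EqvGen r0 b2 x ∨ Relation.EqvGen r0 b2 x1 ∨
        Relation.EqvGen r0 b2 x2 ∨ Relation.EqvGen r0 b2 x3) →
      (Relation.EqvGen r0 a x ∨ Relation.EqvGen r0 a x1 ∨
        Relation.EqvGen r0 a x2 ∨ Relation.EqvGen r0 a x3) := by
    intro a b2 h hd
    rcases hd with h' | h' | h' | h'
    · exact Or.inl (h.trans' h')
    · exact Or.inr (Or.inl (h.trans' h'))
    · exact Or.inr (Or.inr (Or.inl (h.trans' h')))
    · exact Or.inr (Or.inr (Or.inr (h.trans' h')))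
  have main : ∀ e e', Relation.EqvGen (fun a c => U.α a = c ∨ U.transB S bb a = c) e e' →
      (Relation.EqvGen r0 e e' ∨
        ((Relation.EqvGen r0 e x ∨ Relation.EqvGen r0 e x1 ∨
          Relation.EqvGen r0 e x2 ∨ Relation.EqvGen r0 e x3) ∧
         (Relation.EqvGen r0 e' x ∨ Relation.EqvGen r0 e' x1 ∨
          Relation.EqvGen r0 e' x2 ∨ Relation.EqvGen r0 e' x3))) := by
    intro e e' h
    induction h with
    | rel a b hab =>
      rcases hab with hab | hab
      · exact Or.inl (Relation.EqvGen.rel _ _ (by rw [hr0def]; exact Or.inl hab))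
      · by_cases hc : U.Cyc x a
        · refine Or.inr ⟨cycReach a hc, ?_⟩
          have hb2 : b = U.σ a := by rw [← hab, tB_noS a (hSc a hc)]
          refine cycReach b ?_
          rw [hb2]
          exact (U.cyc_sigma x hx a).mpr hc
        · exact Or.inl (Relation.EqvGen.rel _ _ (by rw [hr0def]; exact Or.inr ⟨hc, hab⟩))
    | refl a => exact Or.inl (Relation.EqvGen.refl a)
    | symm a b _ ih =>
      rcases ih with h' | ⟨h1, h2⟩
      · exact Or.inl h'.symm'
      · exact Or.inr ⟨h2, h1⟩
    | trans a b c _ _ ih1 ih2 =>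
      rcases ih1 with h1 | ⟨p1, q1⟩ <;> rcases ih2 with h2 | ⟨p2, q2⟩
      · exact Or.inl (h1.trans' h2)
      · exact Or.inr ⟨reachT h1 p2, q2⟩
      · exact Or.inr ⟨p1, reachT h2.symm' q1⟩
      · exact Or.inr ⟨p1, q2⟩
  have reach : ∀ e, Relation.EqvGen r0 e x ∨ Relation.EqvGen r0 e x1 ∨
      Relation.EqvGen r0 e x2 ∨ Relation.EqvGen r0 e x3 := by
    intro e
    rcases main e x (hconn e x) with h | ⟨h, _⟩
    · exact Or.inl h
    · exact h
  -- r0 is contained in each smoothed relation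
  have trle : ∀ (c : Bool) {a b2 : U.D}, Relation.EqvGen r0 a b2 →
      Relation.EqvGen (fun a2 c2 => U.α a2 = c2 ∨
        U.transB (fun d => S d || decide (U.Cyc x d))
          (fun d => if U.Cyc x d then c else bb d) a2 = c2) a b2 := by
    intro c a b2 h
    refine Relation.EqvGen.mono ?_ _ _ h
    intro a2 c2 h2
    rw [hr0def] at h2
    rcases h2 with h2 | ⟨hnc, h2⟩
    · exact Or.inl h2
    · refine Or.inr ?_
      rw [← h2]
      simp only [transB]
      have e1 : (S a2 || decide (U.Cyc x a2)) = S a2 := by simp [hnc]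
      have e2 : (if U.Cyc x a2 then c else bb a2) = bb a2 := if_neg hnc
      simp only [e1, e2]
  -- values of the smoothed transition on cycle darts
  have gval : ∀ (c : Bool) (d : U.D), U.Cyc x d →
      U.transB (fun d => S d || decide (U.Cyc x d))
        (fun d => if U.Cyc x d then c else bb d) d
        = (if U.col d = c then U.σ d else U.σ.symm d) := by
    intro c d hd
    have h1 : (S d || decide (U.Cyc x d)) = true := by simp [hd]
    simp only [transB, h1, if_pos hd, if_true]
  have gA0 : U.transB (fun d => S d || decide (U.Cyc x d))
      (fun d => if U.Cyc x d then U.col x else bb d) x = x1 := by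
    rw [gval (U.col x) x cyc0, if_pos rfl, hσx]
  have gA2 : U.transB (fun d => S d || decide (U.Cyc x d))
      (fun d => if U.Cyc x d then U.col x else bb d) x2 = x3 := by
    rw [gval (U.col x) x2 cyc2, if_pos c2, hσx2]
  have gB0 : U.transB (fun d => S d || decide (U.Cyc x d))
      (fun d => if U.Cyc x d then !U.col x else bb d) x = x3 := by
    rw [gval (!U.col x) x cyc0, if_neg (by simp), hsymx]
  have gB1 : U.transB (fun d => S d || decide (U.Cyc x d))
      (fun d => if U.Cyc x d then !U.col x else bb d) x1 = x2 := by
    rw [gval (!U.col x) x1 cyc1, if_pos c01, hσx1]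
  have eA0 : Relation.EqvGen (fun a2 c2 => U.α a2 = c2 ∨
      U.transB (fun d => S d || decide (U.Cyc x d))
        (fun d => if U.Cyc x d then U.col x else bb d) a2 = c2) x x1 :=
    Relation.EqvGen.rel _ _ (Or.inr gA0)
  have eA2 : Relation.EqvGen (fun a2 c2 => U.α a2 = c2 ∨
      U.transB (fun d => S d || decide (U.Cyc x d))
        (fun d => if U.Cyc x d then U.col x else bb d) a2 = c2) x2 x3 :=
    Relation.EqvGen.rel _ _ (Or.inr gA2)
  have eB0 : Relation.EqvGen (fun a2 c2 => U.α a2 = c2 ∨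
      U.transB (fun d => S d || decide (U.Cyc x d))
        (fun d => if U.Cyc x d then !U.col x else bb d) a2 = c2) x x3 :=
    Relation.EqvGen.rel _ _ (Or.inr gB0)
  have eB1 : Relation.EqvGen (fun a2 c2 => U.α a2 = c2 ∨
      U.transB (fun d => S d || decide (U.Cyc x d))
        (fun d => if U.Cyc x d then !U.col x else bb d) a2 = c2) x1 x2 :=
    Relation.EqvGen.rel _ _ (Or.inr gB1)
  -- failure of the A-smoothing
  have connA : Relation.EqvGen (fun a2 c2 => U.α a2 = c2 ∨
      U.transB (fun d => S d || decide (U.Cyc x d))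
        (fun d => if U.Cyc x d then U.col x else bb d) a2 = c2) x x2 → False := by
    intro h02
    apply hcon (U.col x)
    have hx_ : ∀ e, Relation.EqvGen (fun a2 c2 => U.α a2 = c2 ∨
        U.transB (fun d => S d || decide (U.Cyc x d))
          (fun d => if U.Cyc x d then U.col x else bb d) a2 = c2) e x := by
      intro e
      rcases reach e with h | h | h | h
      · exact trle (U.col x) h
      · exact (trle (U.col x) h).trans' eA0.symm'
      · exact (trle (U.col x) h).trans' h02.symm'
      · exact (trle (U.col x) h).trans'
          (eA2.symm'.trans' h02.symm')
    intro e e'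
    exact (hx_ e).trans' (hx_ e').symm'
  have connB : Relation.EqvGen (fun a2 c2 => U.α a2 = c2 ∨
      U.transB (fun d => S d || decide (U.Cyc x d))
        (fun d => if U.Cyc x d then !U.col x else bb d) a2 = c2) x x1 → False := by
    intro h01
    apply hcon (!U.col x)
    have hx_ : ∀ e, Relation.EqvGen (fun a2 c2 => U.α a2 = c2 ∨
        U.transB (fun d => S d || decide (U.Cyc x d))
          (fun d => if U.Cyc x d then !U.col x else bb d) a2 = c2) e x := by
      intro e
      rcases reach e with h | h | h | h
      · exact trle (!U.col x) h
      · exact (trle (!U.col x) h).trans' h01.symm'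
      · exact (trle (!U.col x) h).trans'
          (eB1.symm'.trans' h01.symm')
      · exact (trle (!U.col x) h).trans' eB0.symm'
    intro e e'
    exact (hx_ e).trans' (hx_ e').symm'
  -- the six non-relations
  have N02 : ¬ Relation.EqvGen r0 x x2 := fun h => connA (trle (U.col x) h)
  have N03 : ¬ Relation.EqvGen r0 x x3 := fun h =>
    connA ((trle (U.col x) h).trans' eA2.symm')
  have N12 : ¬ Relation.EqvGen r0 x1 x2 := fun h =>
    connA (eA0.trans' (trle (U.col x) h))
  have N13 : ¬ Relation.EqvGen r0 x1 x3 := fun h =>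
    connA (eA0.trans'
      ((trle (U.col x) h).trans' eA2.symm'))
  have N01 : ¬ Relation.EqvGen r0 x x1 := fun h => connB (trle (!U.col x) h)
  have N23 : ¬ Relation.EqvGen r0 x2 x3 := fun h =>
    connB (eB0.trans'
      (((trle (!U.col x) h).symm').trans' eB1.symm'))
  -- the pairing involution k
  set k : U.D → U.D := fun d =>
    if U.σ d = d ∨ U.Cyc x d then d
    else (if U.col d = (if S d then bb d else true) then U.σ d else U.σ.symm d) with hkeq
  have kfix : ∀ d, (U.σ d = d ∨ U.Cyc x d) → k d = d := by
    intro d h; rw [hkeq]; simp only []; rw [if_pos h]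
  have kval : ∀ d, ¬ (U.σ d = d ∨ U.Cyc x d) →
      k d = (if U.col d = (if S d then bb d else true) then U.σ d else U.σ.symm d) := by
    intro d h; rw [hkeq]; simp only []; rw [if_neg h]
  have kfix' : ∀ d, k d = d → (U.σ d = d ∨ U.Cyc x d) := by
    intro d h
    by_contra hn
    rw [kval d hn] at h
    push_neg at hn
    by_cases hcol : U.col d = (if S d then bb d else true)
    · rw [if_pos hcol] at h; exact hn.1 h
    · rw [if_neg hcol] at h; exact U.symm_ne d hn.1 h
  have kinv : Function.Involutive k := by
    intro d
    by_cases h : U.σ d = d ∨ U.Cyc x d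
    · rw [kfix d h, kfix d h]
    · have hn := h
      push_neg at hn
      obtain ⟨hσd, hcd⟩ := hn
      by_cases hcol : U.col d = (if S d then bb d else true)
      · rw [kval d h, if_pos hcol]
        have h2 : ¬ (U.σ (U.σ d) = U.σ d ∨ U.Cyc x (U.σ d)) := by
          push_neg
          exact ⟨fun hh => hσd (hinj hh), fun hh => hcd ((U.cyc_sigma x hx d).mp hh)⟩
        rw [kval _ h2, hSσ, hb, U.col_alt d hσd, ← hcol]
        rw [if_neg (by simp)]
        exact U.σ.symm_apply_apply d
      · rw [kval d h, if_neg hcol]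
        have hσs : U.σ (U.σ.symm d) = d := U.σ.apply_symm_apply d
        have h2 : ¬ (U.σ (U.σ.symm d) = U.σ.symm d ∨ U.Cyc x (U.σ.symm d)) := by
          push_neg
          constructor
          · rw [hσs]; exact (U.symm_ne d hσd).symm
          · rw [U.cyc_symm x hx d]; exact hcd
        have hcs : U.col (U.σ.symm d) = !U.col d := by
          have h5 : U.col d = !U.col (U.σ.symm d) := by
            conv_lhs => rw [← hσs]
            exact U.col_alt _ (by rw [hσs]; exact (U.symm_ne d hσd).symm)
          rw [h5, Bool.not_not]
        have hcold : U.col d = !(if S d then bb d else true) := by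
          revert hcol
          cases hβ : (if S d then bb d else true) <;> cases hγ : U.col d <;> simp
        rw [kval _ h2, hSsymm, hbsymm, hcs, hcold, Bool.not_not]
        rw [if_pos rfl]
        exact hσs
  have ktr : ∀ d, Relation.EqvGen r0 d (k d) := by
    intro d
    by_cases h : U.σ d = d ∨ U.Cyc x d
    · rw [kfix d h]; exact Relation.EqvGen.refl d
    · have hn := h
      push_neg at hn
      obtain ⟨hσd, hcd⟩ := hn
      by_cases hS0 : S d = true
      · have hkd : k d = U.transB S bb d := by
          rw [kval d h]
          simp only [transB]
          rw [hS0]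
          simp
        rw [hkd]
        exact Relation.EqvGen.rel _ _ (by rw [hr0def]; exact Or.inr ⟨hcd, rfl⟩)
      · have hS0' : S d = false := by revert hS0; cases S d <;> simp
        by_cases hcol : U.col d = (if S d then bb d else true)
        · have hkd : k d = U.transB S bb d := by
            rw [kval d h, if_pos hcol, tB_noS d hS0']
          rw [hkd]
          exact Relation.EqvGen.rel _ _ (by rw [hr0def]; exact Or.inr ⟨hcd, rfl⟩)
        · have hkd : k d = U.σ.symm d := by rw [kval d h, if_neg hcol]
          rw [hkd]
          refine Relation.EqvGen.symm _ _ (Relation.EqvGen.rel _ _ ?_)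
          rw [hr0def]
          refine Or.inr ⟨?_, ?_⟩
          · rw [U.cyc_symm x hx d]; exact hcd
          · rw [tB_noS _ (by rw [hSsymm]; exact hS0')]
            exact U.σ.apply_symm_apply d
  -- parity: each class of a cycle dart contains tail or head
  have endpoint : ∀ y, U.Cyc x y →
      (∀ z, U.Cyc x z → z ≠ y → ¬ Relation.EqvGen r0 y z) →
      (Relation.EqvGen r0 y U.tail ∨ Relation.EqvGen r0 y U.head) := by
    intro y hy hsep
    have heven : Even ((Finset.univ.filter
        (fun d => Relation.EqvGen r0 y d ∧ k d = d)).card) :=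
      even_filter_fixed (Relation.EqvGen r0) (fun h => h.symm') (fun h1 h2 => h1.trans' h2)
        U.α k U.α_invol U.α_ne
        (fun d => Relation.EqvGen.rel _ _ (by rw [hr0def]; exact Or.inl rfl))
        kinv ktr y
    set s := Finset.univ.filter (fun d => Relation.EqvGen r0 y d ∧ k d = d) with hs
    have hys : y ∈ s := by
      rw [hs]
      simp only [Finset.mem_filter, Finset.mem_univ, true_and]
      exact ⟨Relation.EqvGen.refl y, kfix y (Or.inr hy)⟩
    have hex2 : ∃ d ∈ s, d ≠ y := by
      by_contra hno
      push_neg at hno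
      have hsing : s = {y} := Finset.eq_singleton_iff_unique_mem.mpr ⟨hys, hno⟩
      rw [hsing, Finset.card_singleton] at heven
      exact Nat.not_even_one heven
    obtain ⟨d, hds, hdy⟩ := hex2
    rw [hs] at hds
    simp only [Finset.mem_filter, Finset.mem_univ, true_and] at hds
    obtain ⟨htr, hfix⟩ := hds
    rcases kfix' d hfix with hfd | hcd2
    · rcases U.endpoints_only d hfd with rfl | rfl
      · exact Or.inl htr
      · exact Or.inr htr
    · exact absurd htr (hsep d hcd2 hdy)
  have sep0 : ∀ z, U.Cyc x z → z ≠ x → ¬ Relation.EqvGen r0 x z := by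
    intro z hz hne
    rcases (cyc_iff z).mp hz with rfl | rfl | rfl | rfl
    · exact absurd rfl hne
    · exact N01
    · exact N02
    · exact N03
  have sep1 : ∀ z, U.Cyc x z → z ≠ x1 → ¬ Relation.EqvGen r0 x1 z := by
    intro z hz hne
    rcases (cyc_iff z).mp hz with rfl | rfl | rfl | rfl
    · exact fun h => N01 h.symm
    · exact absurd rfl hne
    · exact N12
    · exact N13
  have sep2 : ∀ z, U.Cyc x z → z ≠ x2 → ¬ Relation.EqvGen r0 x2 z := by
    intro z hz hne
    rcases (cyc_iff z).mp hz with rfl | rfl | rfl | rfl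
    · exact fun h => N02 h.symm
    · exact fun h => N12 h.symm
    · exact absurd rfl hne
    · exact N23
  have E0 := endpoint x cyc0 sep0
  have E1 := endpoint x1 cyc1 sep1
  have E2 := endpoint x2 cyc2 sep2
  rcases E0 with h0 | h0 <;> rcases E1 with h1 | h1 <;> rcases E2 with h2 | h2
  · exact N01 (h0.trans' h1.symm')
  · exact N01 (h0.trans' h1.symm')
  · exact N02 (h0.trans' h2.symm')
  · exact N12 (h1.trans' h2.symm')
  · exact N12 (h1.trans' h2.symm')
  · exact N02 (h0.trans' h2.symm')
  · exact N01 (h0.trans' h1.symm')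
  · exact N01 (h0.trans' h1.symm')

lemma finish_trail (S bb : U.D → Bool) (hb : ∀ d, bb (U.σ d) = bb d)
    (hall : ∀ d, U.σ d ≠ d → S d = true) (hconn : U.ConnF (U.transB S bb)) :
    Nonempty U.Trail := by
  refine ⟨⟨fun d => if U.σ d = d then false else bb d, ?_, ?_, ?_⟩⟩
  · intro d
    by_cases h : U.σ d = d
    · simp [h]
    · show (if U.σ (U.σ d) = U.σ d then false else bb (U.σ d)) =
          (if U.σ d = d then false else bb d)
      rw [if_neg (fun hh => h (U.σ.injective hh)), if_neg h, hb]
  · intro d hd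
    simp [hd]
  · intro e e'
    refine Relation.EqvGen.mono ?_ _ _ (hconn e e')
    rintro a c (h | h)
    · exact Or.inl h
    · refine Or.inr ?_
      rw [← h]
      show U.trans _ a = U.transB S bb a
      simp only [LinkoidUniverse.trans, transB]
      by_cases hσa : U.σ a = a
      · have h2 : U.σ.symm a = a := by rw [Equiv.symm_apply_eq, hσa]
        simp [hσa, h2]
      · simp [hσa, hall a hσa]

lemma build (n : ℕ) : ∀ (S bb : U.D → Bool), (∀ d, S (U.σ d) = S d) →
    (∀ d, bb (U.σ d) = bb d) → U.ConnF (U.transB S bb) →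
    (Finset.univ.filter (fun d => S d = false ∧ U.σ d ≠ d)).card ≤ n →
    Nonempty U.Trail := by
  classical
  induction n with
  | zero =>
    intro S bb hS hb hconn hcard
    refine U.finish_trail S bb hb ?_ hconn
    intro d hd
    by_contra hSd
    have hSd' : S d = false := by revert hSd; cases S d <;> simp
    have hmem : d ∈ Finset.univ.filter (fun d => S d = false ∧ U.σ d ≠ d) := by
      simp [hSd', hd]
    have := Finset.card_pos.mpr ⟨d, hmem⟩
    omega
  | succ n ih =>
    intro S bb hS hb hconn hcard
    by_cases hex : ∃ xd, S xd = false ∧ U.σ xd ≠ xd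
    · obtain ⟨x, hxS, hx⟩ := hex
      obtain ⟨c, hc⟩ := U.key S bb hS hb hconn x hx hxS
      refine ih (fun d => S d || decide (U.Cyc x d)) (fun d => if U.Cyc x d then c else bb d)
        ?_ ?_ hc ?_
      · intro d
        show (S (U.σ d) || decide (U.Cyc x (U.σ d))) = (S d || decide (U.Cyc x d))
        rw [hS d, (decide_eq_decide).mpr (U.cyc_sigma x hx d)]
      · intro d
        show (if U.Cyc x (U.σ d) then c else bb (U.σ d)) = (if U.Cyc x d then c else bb d)
        by_cases hcd : U.Cyc x d
        · rw [if_pos ((U.cyc_sigma x hx d).mpr hcd), if_pos hcd]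
        · rw [if_neg (fun hh => hcd ((U.cyc_sigma x hx d).mp hh)), if_neg hcd, hb]
      · have hcx : U.Cyc x x := Or.inl rfl
        have hsub : Finset.univ.filter
            (fun d => (S d || decide (U.Cyc x d)) = false ∧ U.σ d ≠ d) ⊆
            Finset.univ.filter (fun d => S d = false ∧ U.σ d ≠ d) := by
          intro d hd
          simp only [Finset.mem_filter, Finset.mem_univ, true_and,
            Bool.or_eq_false_iff] at *
          exact ⟨hd.1.1, hd.2⟩
        have hxmem : x ∈ Finset.univ.filter (fun d => S d = false ∧ U.σ d ≠ d) := by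
          simp [hxS, hx]
        have hxnot : x ∉ Finset.univ.filter
            (fun d => (S d || decide (U.Cyc x d)) = false ∧ U.σ d ≠ d) := by
          intro hmem
          simp only [Finset.mem_filter, Finset.mem_univ, true_and,
            Bool.or_eq_false_iff] at hmem
          rw [decide_eq_true hcx] at hmem
          exact absurd hmem.1.2 (by simp)
        have hlt := Finset.card_lt_card ((Finset.ssubset_iff_of_subset hsub).mpr
          ⟨x, hxmem, hxnot⟩)
        show (Finset.univ.filter
            (fun d => (S d || decide (U.Cyc x d)) = false ∧ U.σ d ≠ d)).card ≤ n
        omega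
    · push_neg at hex
      refine U.finish_trail S bb hb ?_ hconn
      intro d hd
      by_contra hSd
      have hSd' : S d = false := by revert hSd; cases S d <;> simp
      exact hd (hex d hSd')

end LinkoidUniverse

/-- every connected plane multigraph with all vertices of degree 4 except
two of degree 1 admits a trail, i.e. a non-crossing smoothing choice at every
degree-4 vertex whose result is connected (a single simple arc traversing every edge
exactly once, never crossing itself at a crossing). -/
theorem exists_trail (U : LinkoidUniverse) : Nonempty U.Trail := by
  classical
  refine U.build (Finset.univ.filter
      (fun d => (fun _ : U.D => false) d = false ∧ U.σ d ≠ d)).card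
    (fun _ => false) (fun _ => false) (fun _ => rfl) (fun _ => rfl) ?_ le_rfl
  intro e e'
  refine Relation.EqvGen.mono ?_ _ _ (U.conn e e')
  rintro a c (h | h)
  · exact Or.inl h
  · refine Or.inr ?_
    simp only [LinkoidUniverse.transB]
    simpa using h
end

section
/- If one of the two smoothings of a degree-4 vertex of a connected 4-valent plane graph (possibly with two degree-1 endpoints) disconnects the graph, then the other smoothing keeps the graph connected. -/
/-- A connected 4-valent plane graph, possibly with two degree-1 endpoints:
all σ-orbits are 4-cycles except at most two fixed darts. -/
structure FourValentPlane where
  D : Type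
  [finD : Fintype D]
  [decD : DecidableEq D]
  σ : Equiv.Perm D
  α : D → D
  α_invol : Function.Involutive α
  α_ne : ∀ d, α d ≠ d
  col : D → Bool
  col_alt : ∀ d, σ d ≠ d → col (σ d) = ! col d
  degrees : ∀ d, σ d = d ∨ ((σ ^ 4) d = d ∧ (σ ^ 2) d ≠ d)
  endpoints_card : Set.ncard {d | σ d = d} ≤ 2
  conn : ∀ e e' : D, Relation.EqvGen (fun a c => α a = c ∨ σ a = c) e e'
  euler : orbCount (⇑σ) + orbCount (⇑σ ∘ α) = Fintype.card D / 2 + 2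

attribute [instance] FourValentPlane.finD FourValentPlane.decD

namespace FourValentPlane

variable (G : FourValentPlane)

open Classical in
/-- Transition map after smoothing only the crossing containing `d0`, in direction `b0`. -/
noncomputable def transOne (d0 : G.D) (b0 : Bool) : G.D → G.D := fun e =>
  if G.σ.SameCycle d0 e ∧ G.σ e ≠ e then
    (if G.col e = b0 then G.σ e else G.σ.symm e) else G.σ e

/-- Connectivity after smoothing only the crossing of `d0` in direction `b0`. -/
def ConnectedOne (d0 : G.D) (b0 : Bool) : Prop :=
  ∀ e e' : G.D, Relation.EqvGen (fun a c => G.α a = c ∨ G.transOne d0 b0 a = c) e e'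

end FourValentPlane


private lemma eqvGen_mem_iff {D : Type} {r : D → D → Prop} {P : D → Prop}
    (hS : ∀ a c, r a c → (P a ↔ P c)) {a c : D}
    (h : Relation.EqvGen r a c) : P a ↔ P c := by
  induction h with
  | rel a c h => exact hS a c h
  | refl a => exact Iff.rfl
  | symm a c _ ih => exact ih.symm
  | trans a c e _ _ ih1 ih2 => exact ih1.trans ih2

private lemma even_card_of_involution {D : Type} [DecidableEq D] (f : D → D) :
    ∀ s : Finset D, (∀ x ∈ s, f x ∈ s) → (∀ x ∈ s, f (f x) = x) →
      (∀ x ∈ s, f x ≠ x) → Even s.card := by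
  intro s
  induction s using Finset.strongInduction with
  | _ s ih =>
    intro h1 h2 h3
    rcases s.eq_empty_or_nonempty with rfl | ⟨x, hx⟩
    · simp
    · have hfx : f x ∈ s := h1 x hx
      have hne : f x ≠ x := h3 x hx
      have hmem : f x ∈ s.erase x := Finset.mem_erase.2 ⟨hne, hfx⟩
      have hsub : (s.erase x).erase (f x) ⊂ s :=
        ssubset_of_subset_of_ssubset (Finset.erase_subset _ _) (Finset.erase_ssubset hx)
      have hmm : ∀ y ∈ (s.erase x).erase (f x), y ∈ s ∧ y ≠ x ∧ y ≠ f x := by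
        intro y hy
        simp only [Finset.mem_erase] at hy
        exact ⟨hy.2.2, hy.2.1, hy.1⟩
      have hev : Even ((s.erase x).erase (f x)).card := by
        refine ih _ hsub ?_ ?_ ?_
        · intro y hy
          obtain ⟨hys, hyx, hyfx⟩ := hmm y hy
          refine Finset.mem_erase.2 ⟨?_, Finset.mem_erase.2 ⟨?_, h1 y hys⟩⟩
          · intro hh
            exact hyx (by rw [← h2 y hys, hh, h2 x hx])
          · intro hh
            exact hyfx (by rw [← h2 y hys, hh])
        · intro y hy; exact h2 y (hmm y hy).1
        · intro y hy; exact h3 y (hmm y hy).1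
      have hc1 : (s.erase x).card = s.card - 1 := Finset.card_erase_of_mem hx
      have hc2 : ((s.erase x).erase (f x)).card = (s.erase x).card - 1 :=
        Finset.card_erase_of_mem hmem
      have hp1 : 1 ≤ s.card := Finset.card_pos.2 ⟨x, hx⟩
      have hp2 : 1 ≤ (s.erase x).card := Finset.card_pos.2 ⟨f x, hmem⟩
      rw [Nat.even_iff] at hev ⊢
      omega

/-- if one of the two non-crossing smoothings of a degree-4 vertex of a
connected 4-valent plane graph disconnects the graph, then the other smoothing keeps
it connected. -/
theorem other_smoothing_connected (G : FourValentPlane) (d0 : G.D)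
    (hd0 : G.σ d0 ≠ d0) (b0 : Bool) (h : ¬ G.ConnectedOne d0 b0) :
    G.ConnectedOne d0 (!b0) := by
  classical
  by_contra hB
  have hnc : ∀ b : Bool, ¬ G.ConnectedOne d0 b := by
    intro b
    cases b <;> cases b0
    · exact h
    · exact hB
    · exact hB
    · exact h
  clear h hB
  -- iterate lemmas
  have pown : ∀ (n : ℕ) (y : G.D), (G.σ ^ (n + 1)) y = G.σ ((G.σ ^ n) y) := by
    intro n y; rw [pow_succ', Equiv.Perm.mul_apply]
  have pow2 : ∀ y, (G.σ ^ 2) y = G.σ (G.σ y) := by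
    intro y
    rw [show (2 : ℕ) = 1 + 1 from rfl, pown 1, pown 0, pow_zero, Equiv.Perm.one_apply]
  have pow4 : ∀ y, (G.σ ^ 4) y = G.σ (G.σ (G.σ (G.σ y))) := by
    intro y
    rw [show (4 : ℕ) = 3 + 1 from rfl, pown 3, show (3 : ℕ) = 2 + 1 from rfl, pown 2,
      show (2 : ℕ) = 1 + 1 from rfl, pown 1, pown 0, pow_zero, Equiv.Perm.one_apply]
  have hdeg : ∀ e, G.σ e ≠ e → G.σ (G.σ (G.σ (G.σ e))) = e ∧ G.σ (G.σ e) ≠ e := by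
    intro e he
    obtain ⟨h4, h2⟩ := (G.degrees e).resolve_left he
    exact ⟨by rw [← pow4]; exact h4, by rw [← pow2]; exact h2⟩
  obtain ⟨x1, hx1⟩ : ∃ y, G.σ d0 = y := ⟨_, rfl⟩
  obtain ⟨x2, hx2⟩ : ∃ y, G.σ x1 = y := ⟨_, rfl⟩
  obtain ⟨x3, hx3⟩ : ∃ y, G.σ x2 = y := ⟨_, rfl⟩
  have h40 : G.σ x3 = d0 := by
    have := (hdeg d0 hd0).1; rw [hx1, hx2, hx3] at this; exact this
  have h20 : x2 ≠ d0 := by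
    have := (hdeg d0 hd0).2; rw [hx1, hx2] at this; exact this
  have ne01 : d0 ≠ x1 := fun hh => hd0 (by rw [hx1]; exact hh.symm)
  have ne02 : d0 ≠ x2 := fun hh => h20 hh.symm
  have ne03 : d0 ≠ x3 := fun hh => hd0 (by rw [hh, h40]; exact hh)
  have ne12 : x1 ≠ x2 := fun hh => ne01 (G.σ.injective (by rw [hx1, hx2, hh]))
  have ne13 : x1 ≠ x3 := fun hh => ne02 (G.σ.injective (by rw [hx1, hx3, hh]))
  have ne23 : x2 ≠ x3 := fun hh => ne12 (G.σ.injective (by rw [hx2, hx3, hh]))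
  set EF : Finset G.D := {d0, x1, x2, x3} with hEF
  have hmemE : ∀ e, e ∈ EF ↔ (e = d0 ∨ e = x1 ∨ e = x2 ∨ e = x3) := by
    intro e; simp [hEF]
  have mem0 : d0 ∈ EF := (hmemE d0).2 (Or.inl rfl)
  have hEσ : ∀ e ∈ EF, G.σ e ∈ EF := by
    intro e he
    rcases (hmemE e).1 he with rfl | rfl | rfl | rfl <;> rw [hmemE]
    · exact Or.inr (Or.inl hx1)
    · exact Or.inr (Or.inr (Or.inl hx2))
    · exact Or.inr (Or.inr (Or.inr hx3))
    · exact Or.inl h40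
  have hEσs : ∀ e ∈ EF, G.σ.symm e ∈ EF := by
    intro e he
    rcases (hmemE e).1 he with rfl | rfl | rfl | rfl <;> rw [hmemE]
    · exact Or.inr (Or.inr (Or.inr ((Equiv.symm_apply_eq _).2 h40.symm)))
    · exact Or.inl ((Equiv.symm_apply_eq _).2 hx1.symm)
    · exact Or.inr (Or.inl ((Equiv.symm_apply_eq _).2 hx2.symm))
    · exact Or.inr (Or.inr (Or.inl ((Equiv.symm_apply_eq _).2 hx3.symm)))
  have hEne : ∀ e ∈ EF, G.σ e ≠ e := by
    intro e he
    rcases (hmemE e).1 he with rfl | rfl | rfl | rfl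
    · exact hd0
    · rw [hx2]; exact ne12.symm
    · rw [hx3]; exact ne23.symm
    · rw [h40]; exact ne03
  have hE2 : ∀ e ∈ EF, G.σ (G.σ e) ≠ e := by
    intro e he
    rcases (hmemE e).1 he with rfl | rfl | rfl | rfl
    · rw [hx1, hx2]; exact fun hh => ne02 hh.symm
    · rw [hx2, hx3]; exact fun hh => ne13 hh.symm
    · rw [hx3, h40]; exact ne02
    · rw [h40, hx1]; exact ne13
  have hEcyc : ∀ e ∈ EF, G.σ.SameCycle d0 e := by
    intro e he
    rcases (hmemE e).1 he with rfl | rfl | rfl | rfl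
    · exact ⟨0, by simp⟩
    · exact ⟨1, by rw [zpow_one]; exact hx1⟩
    · exact ⟨2, by rw [show (2 : ℤ) = ((2 : ℕ) : ℤ) by norm_num, zpow_natCast, pow2, hx1, hx2]⟩
    · exact ⟨3, by
        rw [show (3 : ℤ) = ((3 : ℕ) : ℤ) by norm_num, zpow_natCast,
          show (3 : ℕ) = 2 + 1 from rfl, pown 2, pow2, hx1, hx2, hx3]⟩
  have hEiff : ∀ e, (G.σ.SameCycle d0 e ∧ G.σ e ≠ e) ↔ e ∈ EF := by
    intro e
    constructor
    · rintro ⟨⟨i, rfl⟩, -⟩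
      have hfix : ∀ q : ℤ, ((G.σ ^ (4 : ℕ)) ^ q) d0 = d0 := by
        intro q
        exact Equiv.Perm.zpow_apply_eq_self_of_apply_eq_self
          ((G.degrees d0).resolve_left hd0).1 q
      have hred : (G.σ ^ i) d0 = (G.σ ^ (i % 4)) d0 := by
        conv_lhs => rw [show i = i % 4 + 4 * (i / 4) by omega]
        rw [zpow_add, Equiv.Perm.mul_apply]
        congr 1
        calc (G.σ ^ ((4 : ℤ) * (i / 4))) d0
            = ((G.σ ^ (4 : ℕ)) ^ (i / 4)) d0 := by
              rw [show (4 : ℤ) = ((4 : ℕ) : ℤ) by norm_num, zpow_mul, zpow_natCast]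
          _ = d0 := hfix _
      rw [hred]
      have hj : i % 4 = 0 ∨ i % 4 = 1 ∨ i % 4 = 2 ∨ i % 4 = 3 := by omega
      rw [hmemE]
      rcases hj with hj | hj | hj | hj <;> rw [hj]
      · exact Or.inl (by simp)
      · exact Or.inr (Or.inl (by rw [zpow_one]; exact hx1))
      · exact Or.inr (Or.inr (Or.inl (by
          rw [show (2 : ℤ) = ((2 : ℕ) : ℤ) by norm_num, zpow_natCast, pow2, hx1, hx2])))
      · exact Or.inr (Or.inr (Or.inr (by
          rw [show (3 : ℤ) = ((3 : ℕ) : ℤ) by norm_num, zpow_natCast,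
            show (3 : ℕ) = 2 + 1 from rfl, pown 2, pow2, hx1, hx2, hx3])))
    · intro he
      exact ⟨hEcyc e he, hEne e he⟩
  -- transOne facts
  have hTo : ∀ (b : Bool) (a : G.D), a ∉ EF → G.transOne d0 b a = G.σ a := by
    intro b a ha
    rw [FourValentPlane.transOne, if_neg (fun hc => ha ((hEiff a).1 hc))]
  have hTi : ∀ (b : Bool), ∀ a ∈ EF,
      G.transOne d0 b a = if G.col a = b then G.σ a else G.σ.symm a := by
    intro b a ha
    rw [FourValentPlane.transOne, if_pos ((hEiff a).2 ha)]
  have hcolσ : ∀ e ∈ EF, G.col (G.σ e) = !G.col e := fun e he => G.col_alt e (hEne e he)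
  have hcolσs : ∀ e ∈ EF, G.col (G.σ.symm e) = !G.col e := by
    intro e he
    have h1 : G.σ.symm e ∈ EF := hEσs e he
    have h2 := G.col_alt (G.σ.symm e) (hEne _ h1)
    rw [Equiv.apply_symm_apply] at h2
    rw [h2, Bool.not_not]
  have hTmem : ∀ (b : Bool), ∀ e ∈ EF, G.transOne d0 b e ∈ EF := by
    intro b e he
    rw [hTi b e he]
    by_cases hc : G.col e = b
    · rw [if_pos hc]; exact hEσ e he
    · rw [if_neg hc]; exact hEσs e he
  have hTinv : ∀ (b : Bool), ∀ e ∈ EF, G.transOne d0 b (G.transOne d0 b e) = e := by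
    intro b e he
    by_cases hc : G.col e = b
    · have h1 : G.transOne d0 b e = G.σ e := by rw [hTi b e he, if_pos hc]
      rw [h1, hTi b _ (hEσ e he), if_neg (by rw [hcolσ e he, hc]; simp),
        Equiv.symm_apply_apply]
    · have hc' : G.col e = !b := Bool.eq_not_iff.2 hc
      have h1 : G.transOne d0 b e = G.σ.symm e := by rw [hTi b e he, if_neg hc]
      rw [h1, hTi b _ (hEσs e he), if_pos (by rw [hcolσs e he, hc', Bool.not_not]),
        Equiv.apply_symm_apply]
  have hTne : ∀ (b : Bool), ∀ e ∈ EF, G.transOne d0 b e ≠ e := by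
    intro b e he
    rw [hTi b e he]
    by_cases hc : G.col e = b
    · rw [if_pos hc]; exact hEne e he
    · rw [if_neg hc]
      intro hh
      exact hEne e he ((Equiv.symm_apply_eq _).1 hh).symm
  have hTtf : ∀ e ∈ EF, G.transOne d0 true e ≠ G.transOne d0 false e := by
    intro e he
    rw [hTi true e he, hTi false e he]
    by_cases hc : G.col e = true
    · rw [if_pos hc, if_neg (by simp [hc])]
      intro hh
      exact hE2 e he (by rw [hh, Equiv.apply_symm_apply])
    · rw [if_neg hc, if_pos (by cases hb : G.col e; rfl; exact absurd hb hc)]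
      intro hh
      exact hE2 e he (by rw [← hh, Equiv.apply_symm_apply])
  -- the cut relation
  set R0 : G.D → G.D → Prop := fun a c => G.α a = c ∨ (a ∉ EF ∧ G.σ a = c) with hR0
  have hmono : ∀ (b : Bool) {a c : G.D}, Relation.EqvGen R0 a c →
      Relation.EqvGen (fun a c => G.α a = c ∨ G.transOne d0 b a = c) a c := by
    intro b a c hac
    refine Relation.EqvGen.mono ?_ a c hac
    rintro x y (hxy | ⟨hx, hxy⟩)
    · exact Or.inl hxy
    · exact Or.inr (by rw [hTo b x hx]; exact hxy)
  -- full connectivity from class containing EF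
  have key : ∀ b : Bool,
      (∀ e ∈ EF, Relation.EqvGen (fun a c => G.α a = c ∨ G.transOne d0 b a = c) d0 e) →
      False := by
    intro b hsup
    apply hnc b
    have hrel : ∀ a c : G.D, (G.α a = c ∨ G.transOne d0 b a = c) →
        (Relation.EqvGen (fun a c => G.α a = c ∨ G.transOne d0 b a = c) d0 a ↔
          Relation.EqvGen (fun a c => G.α a = c ∨ G.transOne d0 b a = c) d0 c) := by
      intro a c hac
      exact ⟨fun ha => Relation.EqvGen.trans _ _ _ ha (Relation.EqvGen.rel a c hac),
        fun hc => Relation.EqvGen.trans _ _ _ hc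
          (Relation.EqvGen.symm a c (Relation.EqvGen.rel a c hac))⟩
    have hstep : ∀ a c : G.D, (G.α a = c ∨ G.σ a = c) →
        (Relation.EqvGen (fun a c => G.α a = c ∨ G.transOne d0 b a = c) d0 a ↔
          Relation.EqvGen (fun a c => G.α a = c ∨ G.transOne d0 b a = c) d0 c) := by
      rintro a c (hac | hac)
      · exact hrel a c (Or.inl hac)
      · by_cases ha : a ∈ EF
        · have hcE : c ∈ EF := hac ▸ hEσ a ha
          exact iff_of_true (hsup a ha) (hsup c hcE)
        · exact hrel a c (Or.inr (by rw [hTo b a ha]; exact hac))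
    have hall : ∀ z, Relation.EqvGen (fun a c => G.α a = c ∨ G.transOne d0 b a = c) d0 z :=
      fun z => (eqvGen_mem_iff hstep (G.conn d0 z)).1 (Relation.EqvGen.refl d0)
    intro e e'
    exact Relation.EqvGen.trans _ _ _ (Relation.EqvGen.symm _ _ (hall e)) (hall e')
  -- darts of EF are pairwise R0-inequivalent
  have hdist : ∀ a ∈ EF, ∀ c ∈ EF, Relation.EqvGen R0 a c → a = c := by
    intro a ha c hc hac
    by_contra hne
    obtain ⟨b, hb⟩ : ∃ b : Bool, G.transOne d0 b a ≠ c := by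
      by_cases h1 : G.transOne d0 true a = c
      · exact ⟨false, fun h2 => hTtf a ha (h1.trans h2.symm)⟩
      · exact ⟨true, h1⟩
    have hTa := hTmem b a ha
    have hTc := hTmem b c hc
    have hd1 : a ≠ G.transOne d0 b a := fun hh => hTne b a ha hh.symm
    have hd2 : a ≠ G.transOne d0 b c := by
      intro hh; apply hb; rw [hh]; exact hTinv b c hc
    have hd4 : G.transOne d0 b a ≠ G.transOne d0 b c := by
      intro hh
      have h5 := congrArg (G.transOne d0 b) hh
      rw [hTinv b a ha, hTinv b c hc] at h5
      exact hne h5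
    have hd5 : c ≠ G.transOne d0 b c := fun hh => hTne b c hc hh.symm
    have hsub : ({a, G.transOne d0 b a, c, G.transOne d0 b c} : Finset G.D) ⊆ EF := by
      intro x hx
      simp only [Finset.mem_insert, Finset.mem_singleton] at hx
      rcases hx with rfl | rfl | rfl | rfl
      · exact ha
      · exact hTa
      · exact hc
      · exact hTc
    have hcard4 : ({a, G.transOne d0 b a, c, G.transOne d0 b c} : Finset G.D).card = 4 := by
      rw [Finset.card_insert_of_notMem (by simp [hd1, hne, hd2]),
        Finset.card_insert_of_notMem (by simp [hb, hd4]),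
        Finset.card_pair hd5]
    have hEcard : EF.card = 4 := by
      rw [hEF, Finset.card_insert_of_notMem (by simp [ne01, ne02, ne03]),
        Finset.card_insert_of_notMem (by simp [ne12, ne13]),
        Finset.card_pair ne23]
    have heq : ({a, G.transOne d0 b a, c, G.transOne d0 b c} : Finset G.D) = EF :=
      Finset.eq_of_subset_of_card_le hsub (by rw [hEcard, hcard4])
    have hreach : ∀ e ∈ EF,
        Relation.EqvGen (fun x y => G.α x = y ∨ G.transOne d0 b x = y) a e := by
      intro e he
      rw [← heq] at he
      simp only [Finset.mem_insert, Finset.mem_singleton] at he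
      rcases he with rfl | rfl | rfl | rfl
      · exact Relation.EqvGen.refl _
      · exact Relation.EqvGen.rel _ _ (Or.inr rfl)
      · exact hmono b hac
      · exact Relation.EqvGen.trans _ _ _ (hmono b hac)
          (Relation.EqvGen.rel _ _ (Or.inr rfl))
    exact key b (fun e he => Relation.EqvGen.trans _ _ _
      (Relation.EqvGen.symm _ _ (hreach d0 mem0)) (hreach e he))
  -- every EF dart reaches a fixed dart of σ through R0
  have main : ∀ a ∈ EF, ∃ x, G.σ x = x ∧ Relation.EqvGen R0 a x := by
    intro a ha
    by_contra hno
    push_neg at hno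
    set CF : Finset G.D := Finset.univ.filter (fun z => Relation.EqvGen R0 a z) with hCF
    have hmemCF : ∀ z, z ∈ CF ↔ Relation.EqvGen R0 a z := by
      intro z; simp [hCF]
    have hstep : ∀ x y, R0 x y → (x ∈ CF ↔ y ∈ CF) := by
      intro x y hxy
      rw [hmemCF, hmemCF]
      exact ⟨fun hx => Relation.EqvGen.trans _ _ _ hx (Relation.EqvGen.rel _ _ hxy),
        fun hy => Relation.EqvGen.trans _ _ _ hy
          (Relation.EqvGen.symm _ _ (Relation.EqvGen.rel _ _ hxy))⟩
    have hα : ∀ x ∈ CF, G.α x ∈ CF := fun x hx => (hstep x _ (Or.inl rfl)).1 hx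
    have hσ : ∀ x ∈ CF, x ∉ EF → G.σ x ∈ CF := fun x hx hxe =>
      (hstep x _ (Or.inr ⟨hxe, rfl⟩)).1 hx
    have hnotE : ∀ x, x ∉ EF → G.σ x ∉ EF := by
      intro x hx hσx
      have h1 := hEσs _ hσx
      rw [Equiv.symm_apply_apply] at h1
      exact hx h1
    have hfixCF : ∀ x ∈ CF, G.σ x ≠ x := by
      intro x hx hfix
      exact hno x hfix ((hmemCF x).1 hx)
    have hnoE : ∀ x ∈ CF, x ≠ a → x ∉ EF := by
      intro x hx hxa hxE
      exact hxa (hdist a ha x hxE ((hmemCF x).1 hx)).symm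
    have haCF : a ∈ CF := (hmemCF a).2 (Relation.EqvGen.refl a)
    have hev1 : Even CF.card :=
      even_card_of_involution G.α CF hα (fun x _ => G.α_invol x) (fun x _ => G.α_ne x)
    have hev2 : Even (CF.erase a).card := by
      refine even_card_of_involution (fun z => G.σ (G.σ z)) _ ?_ ?_ ?_
      · intro x hx
        obtain ⟨hxa, hxC⟩ := Finset.mem_erase.1 hx
        have hxE : x ∉ EF := hnoE x hxC hxa
        have h1 : G.σ x ∈ CF := hσ x hxC hxE
        have h1E : G.σ x ∉ EF := hnotE x hxE
        have h2 : G.σ (G.σ x) ∈ CF := hσ _ h1 h1E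
        have h2E : G.σ (G.σ x) ∉ EF := hnotE _ h1E
        refine Finset.mem_erase.2 ⟨?_, h2⟩
        intro hh
        have hh' : G.σ (G.σ x) = a := hh
        rw [hh'] at h2E
        exact h2E ha
      · intro x hx
        obtain ⟨hxa, hxC⟩ := Finset.mem_erase.1 hx
        exact (hdeg x (hfixCF x hxC)).1
      · intro x hx
        obtain ⟨hxa, hxC⟩ := Finset.mem_erase.1 hx
        exact (hdeg x (hfixCF x hxC)).2
    have hc1 : (CF.erase a).card = CF.card - 1 := Finset.card_erase_of_mem haCF
    have hp1 : 1 ≤ CF.card := Finset.card_pos.2 ⟨a, haCF⟩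
    rw [Nat.even_iff] at hev1 hev2
    omega
  -- produce four distinct fixed darts
  obtain ⟨y0, hy0f, hy0⟩ := main d0 mem0
  obtain ⟨y1, hy1f, hy1⟩ := main x1 ((hmemE x1).2 (Or.inr (Or.inl rfl)))
  obtain ⟨y2, hy2f, hy2⟩ := main x2 ((hmemE x2).2 (Or.inr (Or.inr (Or.inl rfl))))
  obtain ⟨y3, hy3f, hy3⟩ := main x3 ((hmemE x3).2 (Or.inr (Or.inr (Or.inr rfl))))
  have hkey : ∀ u v : G.D, u ∈ EF → v ∈ EF → ∀ yu yv : G.D,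
      Relation.EqvGen R0 u yu → Relation.EqvGen R0 v yv → yu = yv → u = v := by
    intro u v hu hv yu yv hyu hyv hyy
    exact hdist u hu v hv (Relation.EqvGen.trans _ _ _ hyu
      (hyy ▸ (Relation.EqvGen.symm _ _ hyv)))
  have m1 : x1 ∈ EF := (hmemE x1).2 (Or.inr (Or.inl rfl))
  have m2 : x2 ∈ EF := (hmemE x2).2 (Or.inr (Or.inr (Or.inl rfl)))
  have m3 : x3 ∈ EF := (hmemE x3).2 (Or.inr (Or.inr (Or.inr rfl)))
  have hy01 : y0 ≠ y1 := fun hh => ne01 (hkey d0 x1 mem0 m1 y0 y1 hy0 hy1 hh)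
  have hy02 : y0 ≠ y2 := fun hh => ne02 (hkey d0 x2 mem0 m2 y0 y2 hy0 hy2 hh)
  have hy03 : y0 ≠ y3 := fun hh => ne03 (hkey d0 x3 mem0 m3 y0 y3 hy0 hy3 hh)
  have hy12 : y1 ≠ y2 := fun hh => ne12 (hkey x1 x2 m1 m2 y1 y2 hy1 hy2 hh)
  have hy13 : y1 ≠ y3 := fun hh => ne13 (hkey x1 x3 m1 m3 y1 y3 hy1 hy3 hh)
  have hy23 : y2 ≠ y3 := fun hh => ne23 (hkey x2 x3 m2 m3 y2 y3 hy2 hy3 hh)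
  -- contradiction with endpoints_card
  have hsub : ({y0, y1, y2, y3} : Set G.D) ⊆ {d : G.D | G.σ d = d} := by
    rintro x (rfl | rfl | rfl | rfl)
    · exact hy0f
    · exact hy1f
    · exact hy2f
    · exact hy3f
  have hcard : ({y0, y1, y2, y3} : Set G.D).ncard = 4 := by
    rw [Set.ncard_insert_of_notMem (by simp [hy01, hy02, hy03]) (Set.toFinite _),
      Set.ncard_insert_of_notMem (by simp [hy12, hy13]) (Set.toFinite _),
      Set.ncard_pair hy23]
  have hle := Set.ncard_le_ncard hsub (Set.toFinite _)
  have := G.endpoints_card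
  omega
end

section
/- Let U be a connected 1-linkoid universe with the unbounded face starred; then every trail of U determines a spanning tree of the dual graph of U rooted at the starred (unbounded) face, where the tree edges pass through the smoothed crossing sites. -/
open Relation

namespace LKAux

variable {X : Type} [Finite X]

/-- surjection between quotients when one relation is included in the EqvGen of another -/
lemma quot_card_le_of_imp {r r' : X → X → Prop} (h : ∀ a b, r a b → EqvGen r' a b) :
    Nat.card (Quot r') ≤ Nat.card (Quot r) := by
  apply Nat.card_le_card_of_surjective
    (Quot.lift (Quot.mk r') (fun a b hab => Quot.eqvGen_sound (h a b hab)))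
  intro q; induction q using Quot.ind with
  | _ a => exact ⟨Quot.mk r a, rfl⟩

lemma quot_card_eq_of_iff {r r' : X → X → Prop}
    (h1 : ∀ a b, r a b → EqvGen r' a b) (h2 : ∀ a b, r' a b → EqvGen r a b) :
    Nat.card (Quot r) = Nat.card (Quot r') :=
  le_antisymm (quot_card_le_of_imp h2) (quot_card_le_of_imp h1)

/-- add one extra related pair to a relation -/
def pairAdd (r : X → X → Prop) (a b : X) : X → X → Prop :=
  fun x y => r x y ∨ (x = a ∧ y = b)

omit [Finite X] in
lemma eqvGen_pairAdd_elim {r : X → X → Prop} {a b x y : X}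
    (h : EqvGen (pairAdd r a b) x y) :
    EqvGen r x y ∨ ((EqvGen r x a ∨ EqvGen r x b) ∧ (EqvGen r y a ∨ EqvGen r y b)) := by
  induction h with
  | rel u v huv =>
    rcases huv with huv | ⟨rfl, rfl⟩
    · exact Or.inl (EqvGen.rel _ _ huv)
    · exact Or.inr ⟨Or.inl (EqvGen.refl _), Or.inr (EqvGen.refl _)⟩
  | refl u => exact Or.inl (EqvGen.refl _)
  | symm u v _ ih =>
    rcases ih with h | ⟨h1, h2⟩
    · exact Or.inl h.symm
    · exact Or.inr ⟨h2, h1⟩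
  | trans u v w _ _ ih1 ih2 =>
    rcases ih1 with h1 | ⟨h1a, h1b⟩
    · rcases ih2 with h2 | ⟨h2a, h2b⟩
      · exact Or.inl (h1.trans _ _ _ h2)
      · exact Or.inr ⟨h2a.imp (fun h => h1.trans _ _ _ h) (fun h => h1.trans _ _ _ h), h2b⟩
    · rcases ih2 with h2 | ⟨h2a, h2b⟩
      · exact Or.inr ⟨h1a, h1b.imp (fun h => (h2.symm).trans _ _ _ h) (fun h => (h2.symm).trans _ _ _ h)⟩
      · exact Or.inr ⟨h1a, h2b⟩

lemma quot_card_le_pairAdd_add_one (r : X → X → Prop) (a b : X) :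
    Nat.card (Quot r) ≤ Nat.card (Quot (pairAdd r a b)) + 1 := by
  classical
  set f : Quot r → Quot (pairAdd r a b) :=
    Quot.lift (Quot.mk (pairAdd r a b))
      (fun u v huv => Quot.sound (Or.inl huv)) with hf
  have key : ∀ u v : X, f (Quot.mk r u) = f (Quot.mk r v) →
      Quot.mk r u = Quot.mk r v ∨
      ((Quot.mk r u = Quot.mk r a ∨ Quot.mk r u = Quot.mk r b) ∧
       (Quot.mk r v = Quot.mk r a ∨ Quot.mk r v = Quot.mk r b)) := by
    intro u v huv
    have : EqvGen (pairAdd r a b) u v := Quot.eqvGen_exact huv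
    rcases eqvGen_pairAdd_elim this with h | ⟨h1, h2⟩
    · exact Or.inl (Quot.eqvGen_sound h)
    · exact Or.inr ⟨h1.imp Quot.eqvGen_sound Quot.eqvGen_sound,
        h2.imp Quot.eqvGen_sound Quot.eqvGen_sound⟩
  have hinj : Function.Injective
      (fun q : Quot r => if q = Quot.mk r b then Sum.inr () else (Sum.inl (f q) : Quot (pairAdd r a b) ⊕ Unit)) := by
    intro q q' h
    induction q using Quot.ind with | _ u =>
    induction q' using Quot.ind with | _ v =>
    dsimp only at h
    by_cases hu : Quot.mk r u = Quot.mk r b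
    · by_cases hv : Quot.mk r v = Quot.mk r b
      · rw [hu, hv]
      · rw [if_pos hu, if_neg hv] at h; exact absurd h (by simp)
    · by_cases hv : Quot.mk r v = Quot.mk r b
      · rw [if_neg hu, if_pos hv] at h; exact absurd h (by simp)
      · rw [if_neg hu, if_neg hv] at h
        simp only [Sum.inl.injEq] at h
        rcases key u v h with h' | ⟨h1, h2⟩
        · exact h'
        · rcases h1 with h1 | h1
          · rcases h2 with h2 | h2
            · rw [h1, h2]
            · exact absurd h2 hv
          · exact absurd h1 hu
  calc Nat.card (Quot r) ≤ Nat.card (Quot (pairAdd r a b) ⊕ Unit) :=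
        Nat.card_le_card_of_injective _ hinj
    _ = Nat.card (Quot (pairAdd r a b)) + 1 := by simp [Nat.card_sum]

lemma quot_card_pairAdd_le (r : X → X → Prop) (a b : X) :
    Nat.card (Quot (pairAdd r a b)) ≤ Nat.card (Quot r) :=
  quot_card_le_of_imp (fun u v huv => EqvGen.rel _ _ (Or.inl huv))

lemma quot_card_pairAdd_lt {r : X → X → Prop} {a b : X} (h : ¬ EqvGen r a b) :
    Nat.card (Quot (pairAdd r a b)) + 1 ≤ Nat.card (Quot r) := by
  have hle := quot_card_pairAdd_le r a b
  rcases lt_or_eq_of_le hle with hlt | heq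
  · omega
  · exfalso
    have hsurj : Function.Surjective (Quot.lift (Quot.mk (pairAdd r a b))
        (fun u v huv => Quot.sound (Or.inl huv)) : Quot r → Quot (pairAdd r a b)) := by
      intro q; induction q using Quot.ind with
      | _ c => exact ⟨Quot.mk r c, rfl⟩
    have hbij := (Nat.bijective_iff_surjective_and_card _).mpr ⟨hsurj, heq.symm⟩
    have hab : (Quot.lift (Quot.mk (pairAdd r a b))
        (fun u v huv => Quot.sound (Or.inl huv)) : Quot r → Quot (pairAdd r a b)) (Quot.mk r a)
        = (Quot.lift (Quot.mk (pairAdd r a b))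
        (fun u v huv => Quot.sound (Or.inl huv)) : Quot r → Quot (pairAdd r a b)) (Quot.mk r b) :=
      Quot.sound (Or.inr ⟨rfl, rfl⟩)
    exact h (Quot.eqvGen_exact (hbij.injective hab))


section Perm
open Equiv Equiv.Perm

/-- one step of a permutation -/
def pstep (π : Equiv.Perm X) : X → X → Prop := fun x y => π x = y

omit [Finite X] in
lemma eqvGen_pstep_pow (π : Equiv.Perm X) (x : X) : ∀ n : ℕ, EqvGen (pstep π) x ((π ^ n) x) := by
  intro n
  induction n with
  | zero => simpa using EqvGen.refl x
  | succ n ih =>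
    refine ih.trans _ _ _ (EqvGen.rel _ _ ?_)
    show π ((π ^ n) x) = (π ^ (n+1)) x
    rw [pow_succ' π n]
    rfl

lemma eqvGen_pstep_iff_sameCycle (π : Equiv.Perm X) (x y : X) :
    EqvGen (pstep π) x y ↔ π.SameCycle x y := by
  constructor
  · intro h
    induction h with
    | rel u v huv => exact ⟨1, by rw [zpow_one]; exact huv⟩
    | refl u => exact Equiv.Perm.SameCycle.refl _ _
    | symm u v _ ih => exact ih.symm
    | trans u v w _ _ ih1 ih2 => exact ih1.trans ih2
  · intro h
    obtain ⟨n, _, hn⟩ := Equiv.Perm.SameCycle.exists_pow_eq' h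
    exact hn ▸ eqvGen_pstep_pow π x n

omit [Finite X] in
lemma pow_mod_point (π : Equiv.Perm X) (x : X) {n : ℕ} (hn : 0 < n) (hper : (π ^ n) x = x) :
    ∀ k : ℕ, (π ^ k) x = (π ^ (k % n)) x := by
  intro k
  induction k using Nat.strong_induction_on with
  | _ k ih =>
    by_cases hk : k < n
    · rw [Nat.mod_eq_of_lt hk]
    · push_neg at hk
      have h1 : (π ^ k) x = (π ^ (k - n)) x := by
        have hkn : k = (k - n) + n := by omega
        nth_rewrite 1 [hkn]
        rw [pow_add, Equiv.Perm.mul_apply, hper]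
      rw [h1, ih (k - n) (by omega), Nat.mod_eq_sub_mod hk]

lemma sameCycle_nat (π : Equiv.Perm X) {x y : X} (h : π.SameCycle x y) :
    ∃ n : ℕ, (π ^ n) x = y := by
  obtain ⟨n, _, hn⟩ := Equiv.Perm.SameCycle.exists_pow_eq' h
  exact ⟨n, hn⟩

variable [DecidableEq X]

/-- multiplying by a swap toggles whether `a` and `b` lie on the same cycle -/
lemma swap_toggle_sameCycle (π : Equiv.Perm X) (a b : X) (hab : a ≠ b) :
    (π.SameCycle a b → ¬ (π * Equiv.swap a b).SameCycle a b) ∧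
    (¬ π.SameCycle a b → (π * Equiv.swap a b).SameCycle a b) := by
  set π' := π * Equiv.swap a b with hπ'
  have hπ'app : ∀ x, π' x = π (Equiv.swap a b x) := fun x => rfl
  -- the first return time of the π-trajectory of b to {a, b}
  have hex : ∃ n, 0 < n ∧ ((π ^ n) b = a ∨ (π ^ n) b = b) := by
    refine ⟨orderOf π, ?_, Or.inr ?_⟩
    · exact orderOf_pos π
    · rw [pow_orderOf_eq_one]; rfl
  classical
  let n := Nat.find hex
  obtain ⟨hn0, hnmem⟩ : 0 < n ∧ ((π ^ n) b = a ∨ (π ^ n) b = b) := Nat.find_spec hex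
  have hmin : ∀ j, 0 < j → j < n → (π ^ j) b ≠ a ∧ (π ^ j) b ≠ b := by
    intro j hj0 hjn
    have := Nat.find_min hex hjn
    push_neg at this
    exact this hj0
  -- trajectory claim
  have T : ∀ i, 1 ≤ i → i ≤ n → (π' ^ i) a = (π ^ i) b := by
    intro i
    induction i with
    | zero => omega
    | succ i ih =>
      intro _ hin
      by_cases hi0 : i = 0
      · subst hi0
        simp only [zero_add, pow_one]
        rw [hπ'app, Equiv.swap_apply_left]
      · have h1 : 1 ≤ i := by omega
        have h2 : i < n := by omega
        have hih := ih h1 (by omega)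
        have hne := hmin i h1 h2
        rw [pow_succ' π' i, Equiv.Perm.mul_apply, hih, hπ'app,
          Equiv.swap_apply_of_ne_of_ne hne.1 hne.2, ← Equiv.Perm.mul_apply, ← pow_succ' π i]
  have hTn : (π' ^ n) a = (π ^ n) b := T n hn0 le_rfl
  rcases hnmem with hA | hB
  · -- case A : π^n b = a : sameCycle π a b holds, sameCycle π' a b fails
    have hca : π.SameCycle a b := Equiv.Perm.SameCycle.symm ⟨n, by rw [zpow_natCast, hA]⟩
    have hper : (π' ^ n) a = a := by rw [hTn, hA]
    have hnc : ¬ π'.SameCycle a b := by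
      intro hsc
      obtain ⟨k, hk⟩ := sameCycle_nat π' hsc
      rw [pow_mod_point π' a hn0 hper k] at hk
      set r := k % n with hr
      have hrn : r < n := Nat.mod_lt _ hn0
      by_cases hr0 : r = 0
      · rw [hr0, pow_zero] at hk; exact hab (by simpa using hk)
      · have := (T r (by omega) (by omega))
        rw [this] at hk
        exact (hmin r (by omega) hrn).2 hk
    exact ⟨fun _ => hnc, fun hn => absurd hca hn⟩
  · -- case B : π^n b = b : sameCycle π a b fails, sameCycle π' a b holds
    have hsc' : π'.SameCycle a b := ⟨n, by rw [zpow_natCast, hTn, hB]⟩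
    have hnc : ¬ π.SameCycle a b := by
      intro hsc
      obtain ⟨k, hk⟩ := sameCycle_nat π (Equiv.Perm.SameCycle.symm hsc)
      rw [pow_mod_point π b hn0 hB k] at hk
      set r := k % n with hr
      have hrn : r < n := Nat.mod_lt _ hn0
      by_cases hr0 : r = 0
      · rw [hr0, pow_zero] at hk; exact hab (by simpa using hk.symm)
      · exact (hmin r (by omega) hrn).1 hk
    exact ⟨fun hc => absurd hc hnc, fun _ => hsc'⟩

omit [Finite X] in
lemma eqvGen_bind {r r' : X → X → Prop} (h : ∀ x y, r x y → EqvGen r' x y) :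
    ∀ {x y}, EqvGen r x y → EqvGen r' x y := by
  intro x y hxy
  induction hxy with
  | rel u v huv => exact h u v huv
  | refl u => exact EqvGen.refl u
  | symm u v _ ih => exact EqvGen.symm _ _ ih
  | trans u v w _ _ ih1 ih2 => exact EqvGen.trans _ _ _ ih1 ih2

variable [DecidableEq X]

omit [Finite X] in
lemma pstep_mul_swap_sub (π : Equiv.Perm X) (a b : X) :
    ∀ x y, pstep (π * Equiv.swap a b) x y → EqvGen (pairAdd (pstep π) a b) x y := by
  intro x y hxy
  have hxy' : π (Equiv.swap a b x) = y := hxy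
  by_cases hxa : x = a
  · rw [hxa] at hxy' ⊢
    rw [Equiv.swap_apply_left] at hxy'
    exact EqvGen.trans a b y (EqvGen.rel a b (Or.inr ⟨rfl, rfl⟩)) (EqvGen.rel b y (Or.inl hxy'))
  · by_cases hxb : x = b
    · rw [hxb] at hxy' ⊢
      rw [Equiv.swap_apply_right] at hxy'
      exact EqvGen.trans b a y (EqvGen.symm a b (EqvGen.rel a b (Or.inr ⟨rfl, rfl⟩)))
        (EqvGen.rel a y (Or.inl hxy'))
    · rw [Equiv.swap_apply_of_ne_of_ne hxa hxb] at hxy'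
      exact EqvGen.rel _ _ (Or.inl hxy')

omit [Finite X] in
lemma pairAdd_swap_eqv (π : Equiv.Perm X) (a b : X) :
    ∀ x y, EqvGen (pairAdd (pstep π) a b) x y ↔
      EqvGen (pairAdd (pstep (π * Equiv.swap a b)) a b) x y := by
  have hback : π * Equiv.swap a b * Equiv.swap a b = π := by
    rw [mul_assoc, Equiv.swap_mul_self, mul_one]
  intro x y
  constructor
  · refine eqvGen_bind ?_
    intro u v huv
    rcases huv with huv | ⟨rfl, rfl⟩
    · have := pstep_mul_swap_sub (π * Equiv.swap a b) a b u v (by rw [hback]; exact huv)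
      exact this
    · exact EqvGen.rel _ _ (Or.inr ⟨rfl, rfl⟩)
  · refine eqvGen_bind ?_
    intro u v huv
    rcases huv with huv | ⟨rfl, rfl⟩
    · exact pstep_mul_swap_sub π a b u v huv
    · exact EqvGen.rel _ _ (Or.inr ⟨rfl, rfl⟩)

lemma orb_le_mul_swap_add_one (π : Equiv.Perm X) (a b : X) :
    Nat.card (Quot (pstep π)) ≤ Nat.card (Quot (pstep (π * Equiv.swap a b))) + 1 := by
  calc Nat.card (Quot (pstep π)) ≤ Nat.card (Quot (pairAdd (pstep π) a b)) + 1 :=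
        quot_card_le_pairAdd_add_one _ a b
    _ = Nat.card (Quot (pairAdd (pstep (π * Equiv.swap a b)) a b)) + 1 := by
        rw [quot_card_eq_of_iff
          (fun u v h => (pairAdd_swap_eqv π a b u v).mp (EqvGen.rel _ _ h))
          (fun u v h => (pairAdd_swap_eqv π a b u v).mpr (EqvGen.rel _ _ h))]
    _ ≤ Nat.card (Quot (pstep (π * Equiv.swap a b))) + 1 := by
        have := quot_card_pairAdd_le (pstep (π * Equiv.swap a b)) a b
        omega

lemma orb_succ_le_mul_swap (π : Equiv.Perm X) {a b : X} (hsc : π.SameCycle a b)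
    (hab : a ≠ b) :
    Nat.card (Quot (pstep π)) + 1 ≤ Nat.card (Quot (pstep (π * Equiv.swap a b))) := by
  have hnc : ¬ (π * Equiv.swap a b).SameCycle a b := (swap_toggle_sameCycle π a b hab).1 hsc
  have h1 : Nat.card (Quot (pstep π)) = Nat.card (Quot (pairAdd (pstep π) a b)) := by
    refine quot_card_eq_of_iff (fun u v h => EqvGen.rel _ _ (Or.inl h)) ?_
    intro u v huv
    rcases huv with huv | ⟨rfl, rfl⟩
    · exact EqvGen.rel _ _ huv
    · exact (eqvGen_pstep_iff_sameCycle π u v).mpr hsc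
  have h2 : Nat.card (Quot (pairAdd (pstep π) a b))
      = Nat.card (Quot (pairAdd (pstep (π * Equiv.swap a b)) a b)) := by
    rw [quot_card_eq_of_iff
      (fun u v h => (pairAdd_swap_eqv π a b u v).mp (EqvGen.rel _ _ h))
      (fun u v h => (pairAdd_swap_eqv π a b u v).mpr (EqvGen.rel _ _ h))]
  have h3 := quot_card_pairAdd_lt (r := pstep (π * Equiv.swap a b)) (a := a) (b := b)
    (fun h => hnc ((eqvGen_pstep_iff_sameCycle _ a b).mp h))
  omega

/-- the joint relation of a permutation and an involution -/
def crel (π β : Equiv.Perm X) : X → X → Prop := fun x y => π x = y ∨ β x = y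

omit [Finite X] in
lemma crel_translate (π β : Equiv.Perm X) {a b : X} (hb : β a = b) (hβb : β b = a)
    (hβ'x : ∀ x, x ≠ a → x ≠ b → (Equiv.swap a b * β) x = β x) :
    ∀ x y, crel π β x y →
      EqvGen (pairAdd (crel (π * Equiv.swap a b) (Equiv.swap a b * β)) a b) x y := by
  intro x y hxy
  have hswb : (π * Equiv.swap a b) b = π a := by
    show π (Equiv.swap a b b) = π a; rw [Equiv.swap_apply_right]
  have hswa : (π * Equiv.swap a b) a = π b := by
    show π (Equiv.swap a b a) = π b; rw [Equiv.swap_apply_left]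
  rcases hxy with hxy | hxy
  · by_cases hxa : x = a
    · rw [hxa, ← hxy, hxa]
      exact EqvGen.trans a b (π a) (EqvGen.rel a b (Or.inr ⟨rfl, rfl⟩))
        (EqvGen.rel b (π a) (Or.inl (Or.inl hswb)))
    · by_cases hxb : x = b
      · rw [hxb, ← hxy, hxb]
        exact EqvGen.trans b a (π b) (EqvGen.symm a b (EqvGen.rel a b (Or.inr ⟨rfl, rfl⟩)))
          (EqvGen.rel a (π b) (Or.inl (Or.inl hswa)))
      · rw [← hxy]
        refine EqvGen.rel x (π x) (Or.inl (Or.inl ?_))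
        show π (Equiv.swap a b x) = π x
        rw [Equiv.swap_apply_of_ne_of_ne hxa hxb]
  · by_cases hxa : x = a
    · rw [hxa, ← hxy, hxa, hb]
      exact EqvGen.rel a b (Or.inr ⟨rfl, rfl⟩)
    · by_cases hxb : x = b
      · rw [hxb, ← hxy, hxb, hβb]
        exact EqvGen.symm a b (EqvGen.rel a b (Or.inr ⟨rfl, rfl⟩))
      · rw [← hxy, ← hβ'x x hxa hxb]
        exact EqvGen.rel _ _ (Or.inl (Or.inr rfl))

lemma key_ineq [Fintype X] : ∀ (k : ℕ) (π β : Equiv.Perm X), Function.Involutive β →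
    (Finset.univ.filter fun x => β x ≠ x).card = k →
    2 * Nat.card (Quot (pstep (π * β))) + 2 * Nat.card (Quot (pstep π))
      ≤ 4 * Nat.card (Quot (crel π β)) + k := by
  intro k
  induction k using Nat.strong_induction_on with
  | _ k ih =>
  intro π β hβ hcard
  by_cases hall : ∀ x, β x = x
  · have hβ1 : β = 1 := Equiv.ext fun x => (hall x).trans rfl
    subst hβ1
    rw [mul_one]
    have hco : Nat.card (Quot (crel π 1)) = Nat.card (Quot (pstep π)) := by
      refine quot_card_eq_of_iff ?_ (fun u v h => EqvGen.rel _ _ (Or.inl h))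
      intro u v huv
      rcases huv with huv | huv
      · exact EqvGen.rel _ _ huv
      · have : u = v := huv
        rw [this]; exact EqvGen.refl v
    omega
  · push_neg at hall
    obtain ⟨a0, ha0⟩ := hall
    have hβb : β (β a0) = a0 := hβ a0
    have hab : a0 ≠ β a0 := fun h => ha0 h.symm
    have hβ'a : (Equiv.swap a0 (β a0) * β) a0 = a0 := by
      show Equiv.swap a0 (β a0) (β a0) = a0
      rw [Equiv.swap_apply_right]
    have hβ'b : (Equiv.swap a0 (β a0) * β) (β a0) = β a0 := by
      show Equiv.swap a0 (β a0) (β (β a0)) = β a0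
      rw [hβb, Equiv.swap_apply_left]
    have hβ'x : ∀ x, x ≠ a0 → x ≠ β a0 → (Equiv.swap a0 (β a0) * β) x = β x := by
      intro x hxa hxb
      show Equiv.swap a0 (β a0) (β x) = β x
      refine Equiv.swap_apply_of_ne_of_ne ?_ ?_
      · intro h; exact hxb (by rw [← hβ x, h])
      · intro h; exact hxa (by rw [← hβ x, h, hβb])
    have hβ'inv : Function.Involutive (Equiv.swap a0 (β a0) * β) := by
      intro x
      by_cases hxa : x = a0
      · rw [hxa, hβ'a, hβ'a]
      · by_cases hxb : x = β a0
        · rw [hxb, hβ'b, hβ'b]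
        · rw [hβ'x x hxa hxb]
          have h1 : β x ≠ a0 := fun h => hxb (by rw [← hβ x, h])
          have h2 : β x ≠ β a0 := fun h => hxa (by rw [← hβ x, h, hβb])
          rw [hβ'x _ h1 h2, hβ x]
    have hmem_a : a0 ∈ Finset.univ.filter fun x => β x ≠ x := by
      simp only [Finset.mem_filter, Finset.mem_univ, true_and]; exact ha0
    have hmem_b : β a0 ∈ Finset.univ.filter fun x => β x ≠ x := by
      simp only [Finset.mem_filter, Finset.mem_univ, true_and]
      rw [hβb]; exact hab
    have hfil : (Finset.univ.filter fun x => (Equiv.swap a0 (β a0) * β) x ≠ x)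
        = (Finset.univ.filter fun x => β x ≠ x) \ {a0, β a0} := by
      ext x
      simp only [Finset.mem_filter, Finset.mem_univ, true_and, Finset.mem_sdiff,
        Finset.mem_insert, Finset.mem_singleton]
      constructor
      · intro hx
        by_cases hxa : x = a0
        · rw [hxa, hβ'a] at hx; exact absurd rfl hx
        · by_cases hxb : x = β a0
          · rw [hxb, hβ'b] at hx; exact absurd rfl hx
          · rw [hβ'x x hxa hxb] at hx
            exact ⟨hx, by tauto⟩
      · rintro ⟨hx, hxab⟩
        push_neg at hxab
        rw [hβ'x x hxab.1 hxab.2]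
        exact hx
    have hsub : ({a0, β a0} : Finset X) ⊆ Finset.univ.filter fun x => β x ≠ x := by
      intro x hx
      rcases Finset.mem_insert.mp hx with rfl | hx
      · exact hmem_a
      · rw [Finset.mem_singleton.mp hx]; exact hmem_b
    have hcard_ab : ({a0, β a0} : Finset X).card = 2 := by
      rw [Finset.card_insert_of_notMem (by simpa using hab), Finset.card_singleton]
    have hk2 : 2 ≤ k := by
      rw [← hcard, ← hcard_ab]
      exact Finset.card_le_card hsub
    have hfilcard : (Finset.univ.filter fun x => (Equiv.swap a0 (β a0) * β) x ≠ x).card = k - 2 := by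
      rw [hfil, Finset.card_sdiff_of_subset hsub, hcard, hcard_ab]
    have hπβ : π * β = (π * Equiv.swap a0 (β a0)) * (Equiv.swap a0 (β a0) * β) := by
      rw [mul_assoc, ← mul_assoc (Equiv.swap a0 (β a0)) (Equiv.swap a0 (β a0)) β,
        Equiv.swap_mul_self, one_mul]
    have IH := ih (k - 2) (by omega) (π * Equiv.swap a0 (β a0)) (Equiv.swap a0 (β a0) * β)
      hβ'inv hfilcard
    rw [hπβ]
    have htrans := crel_translate π β rfl hβb hβ'x
    by_cases hsc : π.SameCycle a0 (β a0)
    · -- split case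
      have hL2 := orb_succ_le_mul_swap π hsc hab
      have step1 : Nat.card (Quot (crel (π * Equiv.swap a0 (β a0)) (Equiv.swap a0 (β a0) * β)))
          ≤ Nat.card (Quot (pairAdd (crel (π * Equiv.swap a0 (β a0)) (Equiv.swap a0 (β a0) * β)) a0 (β a0))) + 1 :=
        quot_card_le_pairAdd_add_one _ a0 (β a0)
      have step2 : Nat.card (Quot (pairAdd (crel (π * Equiv.swap a0 (β a0)) (Equiv.swap a0 (β a0) * β)) a0 (β a0)))
          ≤ Nat.card (Quot (crel π β)) := quot_card_le_of_imp htrans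
      omega
    · -- merge case
      have hL1 := orb_le_mul_swap_add_one π a0 (β a0)
      have hsc' : (π * Equiv.swap a0 (β a0)).SameCycle a0 (β a0) :=
        (swap_toggle_sameCycle π a0 (β a0) hab).2 hsc
      have hab' : EqvGen (crel (π * Equiv.swap a0 (β a0)) (Equiv.swap a0 (β a0) * β)) a0 (β a0) :=
        eqvGen_bind (fun u v h => EqvGen.rel u v (Or.inl h))
          ((eqvGen_pstep_iff_sameCycle _ a0 (β a0)).mpr hsc')
      have hpair : Nat.card (Quot (pairAdd (crel (π * Equiv.swap a0 (β a0)) (Equiv.swap a0 (β a0) * β)) a0 (β a0)))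
          = Nat.card (Quot (crel (π * Equiv.swap a0 (β a0)) (Equiv.swap a0 (β a0) * β))) := by
        refine quot_card_eq_of_iff ?_ (fun u v h => EqvGen.rel _ _ (Or.inl h))
        intro u v huv
        rcases huv with huv | ⟨rfl, rfl⟩
        · exact EqvGen.rel _ _ huv
        · exact hab'
      have step2 : Nat.card (Quot (pairAdd (crel (π * Equiv.swap a0 (β a0)) (Equiv.swap a0 (β a0) * β)) a0 (β a0)))
          ≤ Nat.card (Quot (crel π β)) := quot_card_le_of_imp htrans
      omega

end Perm

end LKAux
-- === application layer ===
namespace LKApp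

open Relation LKAux Equiv

variable {U : LinkoidUniverse}

lemma pow2_apply {X : Type} (π : Equiv.Perm X) (d : X) : (π ^ 2) d = π (π d) := by
  rw [pow_succ, pow_one]; rfl

lemma pow3_apply {X : Type} (π : Equiv.Perm X) (d : X) : (π ^ 3) d = π (π (π d)) := by
  rw [pow_succ, pow_succ, pow_one]; rfl

lemma pow4_apply {X : Type} (π : Equiv.Perm X) (d : X) : (π ^ 4) d = π (π (π (π d))) := by
  rw [pow_succ, pow_succ, pow_succ, pow_one]; rfl

lemma pow4 {d : U.D} (h : U.σ d ≠ d) : U.σ (U.σ (U.σ (U.σ d))) = d := by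
  rw [← pow4_apply]; exact (U.deg4 d h).1

lemma ne2 {d : U.D} (h : U.σ d ≠ d) : U.σ (U.σ d) ≠ d := by
  rw [← pow2_apply]; exact (U.deg4 d h).2

lemma ne3 {d : U.D} (h : U.σ d ≠ d) : U.σ (U.σ (U.σ d)) ≠ d := by
  intro he
  have h4 := pow4 h
  rw [he] at h4
  exact h h4

instance instFinVertex : Finite U.Vertex := by
  unfold LinkoidUniverse.Vertex; infer_instance

instance instFinFace : Finite U.Face := by
  unfold LinkoidUniverse.Face; infer_instance

instance instFinCrossing : Finite U.Crossing := by
  unfold LinkoidUniverse.Crossing; infer_instance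

lemma vertexOf_sigma (d : U.D) : U.vertexOf (U.σ d) = U.vertexOf d := by
  exact (@Quot.sound U.D (fun a b => U.σ a = b) d (U.σ d) rfl).symm

lemma vertex_eq_iff (d e : U.D) : U.vertexOf d = U.vertexOf e ↔ U.σ.SameCycle d e :=
  Quot.eq.trans (eqvGen_pstep_iff_sameCycle U.σ d e)

lemma eq_of_vertex_fixed {d : U.D} (h : U.σ d = d) {e : U.D}
    (hv : U.vertexOf e = U.vertexOf d) : e = d := by
  have hsc : U.σ.SameCycle d e := ((vertex_eq_iff e d).mp hv).symm
  obtain ⟨n, hn⟩ := sameCycle_nat U.σ hsc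
  have hfix : ∀ m : ℕ, (U.σ ^ m) d = d := by
    intro m
    induction m with
    | zero => rfl
    | succ m ih => rw [pow_succ', Equiv.Perm.mul_apply, ih, h]
  rw [← hn, hfix n]

lemma sigma_ne_of_vertex {d : U.D} (h : U.σ d ≠ d) {e : U.D}
    (hv : U.vertexOf e = U.vertexOf d) : U.σ e ≠ e := by
  intro hfix
  have hde : d = e := eq_of_vertex_fixed hfix hv.symm
  subst hde
  exact h hfix

lemma orbit_mem {d : U.D} (h : U.σ d ≠ d) {e : U.D} (hv : U.vertexOf e = U.vertexOf d) :
    e = d ∨ e = U.σ d ∨ e = U.σ (U.σ d) ∨ e = U.σ (U.σ (U.σ d)) := by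
  have hsc : U.σ.SameCycle d e := ((vertex_eq_iff e d).mp hv).symm
  obtain ⟨n, hn⟩ := sameCycle_nat U.σ hsc
  have h4 : (U.σ ^ 4) d = d := (U.deg4 d h).1
  have := pow_mod_point U.σ d (by norm_num) h4 n
  rw [this] at hn
  have hlt : n % 4 = 0 ∨ n % 4 = 1 ∨ n % 4 = 2 ∨ n % 4 = 3 := by omega
  rcases hlt with h0 | h0 | h0 | h0 <;> rw [h0] at hn
  · left; rw [← hn]; rfl
  · right; left; rw [← hn, pow_one]
  · right; right; left; rw [← hn, pow2_apply]
  · right; right; right; rw [← hn, pow3_apply]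


lemma col2 {d : U.D} (h : U.σ d ≠ d) : U.col (U.σ (U.σ d)) = U.col d := by
  have h1 : U.σ (U.σ d) ≠ U.σ d := sigma_ne_of_vertex h (vertexOf_sigma d)
  rw [U.col_alt (U.σ d) h1, U.col_alt d h, Bool.not_not]

lemma vt_ne_vh : U.vertexOf U.tail ≠ U.vertexOf U.head := by
  intro h
  exact U.tail_ne_head (eq_of_vertex_fixed U.σ_head h)

lemma crossing_vertex {x : U.D} (h : U.σ x ≠ x) :
    U.vertexOf x ≠ U.vertexOf U.tail ∧ U.vertexOf x ≠ U.vertexOf U.head := by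
  constructor
  · intro hv
    have : x = U.tail := eq_of_vertex_fixed U.σ_tail hv
    rw [this] at h; exact h U.σ_tail
  · intro hv
    have : x = U.head := eq_of_vertex_fixed U.σ_head hv
    rw [this] at h; exact h U.σ_head

/-- counting : number of vertices -/
lemma card_vertex : Nat.card U.Vertex = Nat.card U.Crossing + 2 := by
  classical
  letI : Fintype U.Vertex := Fintype.ofFinite _
  have e1 : U.Crossing ≃ {v : U.Vertex // ¬ (v = U.vertexOf U.tail ∨ v = U.vertexOf U.head)} :=
    Equiv.subtypeEquivRight (fun v => by rw [not_or])
  have hp : Fintype.card {v : U.Vertex // v = U.vertexOf U.tail ∨ v = U.vertexOf U.head} = 2 := by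
    rw [Fintype.card_subtype]
    have : Finset.univ.filter (fun v : U.Vertex => v = U.vertexOf U.tail ∨ v = U.vertexOf U.head)
        = {U.vertexOf U.tail, U.vertexOf U.head} := by
      ext v; simp [Finset.mem_filter, Finset.mem_insert, Finset.mem_singleton]
    rw [this, Finset.card_insert_of_notMem (by simpa using vt_ne_vh), Finset.card_singleton]
  have hple : Fintype.card {v : U.Vertex // v = U.vertexOf U.tail ∨ v = U.vertexOf U.head}
      ≤ Fintype.card U.Vertex := Fintype.card_subtype_le _
  have hcompl := Fintype.card_subtype_compl
    (fun v : U.Vertex => v = U.vertexOf U.tail ∨ v = U.vertexOf U.head)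
  rw [Nat.card_congr e1, Nat.card_eq_fintype_card, Nat.card_eq_fintype_card, hcompl, hp]
  omega

/-- counting : number of darts -/
lemma card_darts : Fintype.card U.D = 4 * Nat.card U.Crossing + 2 := by
  classical
  letI : Fintype U.Vertex := Fintype.ofFinite _
  have key := Finset.card_eq_sum_card_fiberwise
    (f := U.vertexOf) (s := (Finset.univ : Finset U.D)) (t := Finset.univ)
    (fun x _ => Finset.mem_univ _)
  have fib_fix : ∀ d : U.D, U.σ d = d →
      Finset.univ.filter (fun e => U.vertexOf e = U.vertexOf d) = {d} := by
    intro d hd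
    ext e
    simp only [Finset.mem_filter, Finset.mem_univ, true_and, Finset.mem_singleton]
    constructor
    · intro hv; exact eq_of_vertex_fixed hd hv
    · rintro rfl; rfl
  have fib_cross : ∀ d : U.D, U.σ d ≠ d →
      (Finset.univ.filter (fun e => U.vertexOf e = U.vertexOf d)).card = 4 := by
    intro d hd
    have hset : Finset.univ.filter (fun e => U.vertexOf e = U.vertexOf d)
        = {d, U.σ d, U.σ (U.σ d), U.σ (U.σ (U.σ d))} := by
      ext e
      simp only [Finset.mem_filter, Finset.mem_univ, true_and, Finset.mem_insert,
        Finset.mem_singleton]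
      constructor
      · intro hv; exact orbit_mem hd hv
      · rintro (rfl | rfl | rfl | rfl)
        · rfl
        · exact vertexOf_sigma d
        · rw [vertexOf_sigma, vertexOf_sigma]
        · rw [vertexOf_sigma, vertexOf_sigma, vertexOf_sigma]
    rw [hset]
    have n01 : d ≠ U.σ d := fun h => hd h.symm
    have n02 : d ≠ U.σ (U.σ d) := fun h => ne2 hd h.symm
    have n03 : d ≠ U.σ (U.σ (U.σ d)) := fun h => ne3 hd h.symm
    have n12 : U.σ d ≠ U.σ (U.σ d) := fun h => hd (U.σ.injective h).symm
    have n13 : U.σ d ≠ U.σ (U.σ (U.σ d)) := fun h => ne2 hd (U.σ.injective h).symm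
    have n23 : U.σ (U.σ d) ≠ U.σ (U.σ (U.σ d)) := fun h =>
      hd (U.σ.injective (U.σ.injective h)).symm
    rw [Finset.card_insert_of_notMem (by simp [n01, n02, n03]),
      Finset.card_insert_of_notMem (by simp [n12, n13]),
      Finset.card_insert_of_notMem (by simp [n23]), Finset.card_singleton]
  -- split the sum
  have hA : ({U.vertexOf U.tail, U.vertexOf U.head} : Finset U.Vertex) ⊆ Finset.univ :=
    Finset.subset_univ _
  have hsplit := Finset.sum_sdiff (f := fun v : U.Vertex =>
    (Finset.univ.filter (fun e : U.D => U.vertexOf e = v)).card) hA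
  have hsumA : ∑ v ∈ ({U.vertexOf U.tail, U.vertexOf U.head} : Finset U.Vertex),
      (Finset.univ.filter (fun e : U.D => U.vertexOf e = v)).card = 2 := by
    rw [Finset.sum_insert (by simpa using vt_ne_vh), Finset.sum_singleton,
      fib_fix U.tail U.σ_tail, fib_fix U.head U.σ_head]
    simp
  have hsumB : ∑ v ∈ (Finset.univ \ {U.vertexOf U.tail, U.vertexOf U.head} : Finset U.Vertex),
      (Finset.univ.filter (fun e : U.D => U.vertexOf e = v)).card
      = 4 * Nat.card U.Crossing := by
    have hcongr : ∀ v ∈ (Finset.univ \ {U.vertexOf U.tail, U.vertexOf U.head} : Finset U.Vertex),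
        (Finset.univ.filter (fun e : U.D => U.vertexOf e = v)).card = 4 := by
      intro v hv
      simp only [Finset.mem_sdiff, Finset.mem_univ, true_and, Finset.mem_insert,
        Finset.mem_singleton, not_or] at hv
      obtain ⟨d, hd⟩ := Quot.exists_rep v
      have hvd : U.vertexOf d = v := hd
      have hσd : U.σ d ≠ d := by
        intro hfix
        rcases U.endpoints_only d hfix with rfl | rfl
        · exact hv.1 hvd.symm
        · exact hv.2 hvd.symm
      rw [← hvd]
      exact fib_cross d hσd
    rw [Finset.sum_congr rfl hcongr, Finset.sum_const, smul_eq_mul,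
      Finset.card_sdiff_of_subset hA,
      Finset.card_insert_of_notMem (by simpa using vt_ne_vh), Finset.card_singleton]
    have hV : (Finset.univ : Finset U.Vertex).card = Nat.card U.Vertex := by
      rw [Nat.card_eq_fintype_card]; rfl
    rw [hV, card_vertex]
    omega
  have hDsum : Fintype.card U.D = ∑ v ∈ (Finset.univ : Finset U.Vertex),
      (Finset.univ.filter (fun e : U.D => U.vertexOf e = v)).card := key
  rw [hDsum, ← hsplit, hsumA, hsumB]

section TrailLemmas

variable (T : U.Trail)

lemma b_sigma (d : U.D) : T.b (U.σ d) = T.b d := T.const d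

lemma b_symm (d : U.D) : T.b (U.σ.symm d) = T.b d := by
  have := T.const (U.σ.symm d)
  rw [U.σ.apply_symm_apply] at this
  exact this.symm

lemma col_symm {d : U.D} (h : U.σ d ≠ d) : U.col (U.σ.symm d) = !U.col d := by
  have hne : U.σ (U.σ.symm d) ≠ U.σ.symm d := by
    rw [U.σ.apply_symm_apply]
    intro hh
    apply h
    conv_lhs => rw [hh]
    rw [U.σ.apply_symm_apply]
  have := U.col_alt (U.σ.symm d) hne
  rw [U.σ.apply_symm_apply] at this
  cases hcd : U.col d <;> rw [hcd] at this <;> simp at this <;> simp [this]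

lemma trans_invol : Function.Involutive (U.trans T.b) := by
  intro e
  by_cases hfix : U.σ e = e
  · have hinv : U.σ.symm e = e := by
      conv_lhs => rw [← hfix]
      exact U.σ.symm_apply_apply e
    unfold LinkoidUniverse.trans
    by_cases hc : U.col e = T.b e
    · rw [if_pos hc, hfix, if_pos hc, hfix]
    · rw [if_neg hc, hinv, if_neg hc, hinv]
  · by_cases hc : U.col e = T.b e
    · have h1 : U.trans T.b e = U.σ e := by unfold LinkoidUniverse.trans; rw [if_pos hc]
      have hcol : U.col (U.σ e) = !U.col e := U.col_alt e hfix
      have hb : T.b (U.σ e) = T.b e := T.const e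
      have hneg : ¬ (U.col (U.σ e) = T.b (U.σ e)) := by
        rw [hcol, hb, ← hc]; simp
      have h2 : U.trans T.b (U.σ e) = U.σ.symm (U.σ e) := by
        unfold LinkoidUniverse.trans; rw [if_neg hneg]
      rw [h1, h2, U.σ.symm_apply_apply]
    · have h1 : U.trans T.b e = U.σ.symm e := by unfold LinkoidUniverse.trans; rw [if_neg hc]
      have hcol : U.col (U.σ.symm e) = !U.col e := col_symm hfix
      have hb : T.b (U.σ.symm e) = T.b e := b_symm T e
      have hpos : U.col (U.σ.symm e) = T.b (U.σ.symm e) := by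
        rw [hcol, hb]
        cases hce : U.col e <;> cases hbe : T.b e <;> simp_all
      have h2 : U.trans T.b (U.σ.symm e) = U.σ (U.σ.symm e) := by
        unfold LinkoidUniverse.trans; rw [if_pos hpos]
      rw [h1, h2, U.σ.apply_symm_apply]

/-- the smoothing transition as a permutation -/
noncomputable def tperm : Equiv.Perm U.D := Function.Involutive.toPerm _ (trans_invol T)

lemma tperm_apply (d : U.D) : tperm T d = U.trans T.b d := rfl

lemma trans_of_col_eq {d : U.D} (h : U.col d = T.b d) : U.trans T.b d = U.σ d := by
  unfold LinkoidUniverse.trans; rw [if_pos h]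

lemma trans_of_col_ne {d : U.D} (h : ¬ U.col d = T.b d) : U.trans T.b d = U.σ.symm d := by
  unfold LinkoidUniverse.trans; rw [if_neg h]

lemma symm_eq_three {d : U.D} (h : U.σ d ≠ d) : U.σ.symm d = U.σ (U.σ (U.σ d)) := by
  apply U.σ.injective
  rw [U.σ.apply_symm_apply, pow4 h]

/-- number of orbits of the smoothing transition -/
lemma card_tau_orbits : Nat.card (Quot (pstep (tperm T))) = 2 * Nat.card U.Crossing + 2 := by
  classical
  letI : Fintype U.Vertex := Fintype.ofFinite _
  letI : Fintype (Quot (pstep (tperm T))) := Fintype.ofFinite _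
  have gsound : ∀ a b : U.D, pstep (tperm T) a b → U.vertexOf a = U.vertexOf b := by
    intro a b hab
    have : U.trans T.b a = b := hab
    by_cases hc : U.col a = T.b a
    · rw [trans_of_col_eq T hc] at this
      rw [← this, vertexOf_sigma]
    · rw [trans_of_col_ne T hc] at this
      rw [← this]
      have h2 := vertexOf_sigma (U.σ.symm a)
      rw [U.σ.apply_symm_apply] at h2
      exact h2
  set g : Quot (pstep (tperm T)) → U.Vertex := Quot.lift U.vertexOf gsound with hg
  have key := Finset.card_eq_sum_card_fiberwise
    (f := g) (s := (Finset.univ : Finset (Quot (pstep (tperm T))))) (t := Finset.univ)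
    (fun x _ => Finset.mem_univ _)
  -- fiber over a fixed vertex
  have fib_fix : ∀ d : U.D, U.σ d = d →
      Finset.univ.filter (fun q => g q = U.vertexOf d) = {Quot.mk _ d} := by
    intro d hd
    ext q
    induction q using Quot.ind with | _ e =>
    simp only [Finset.mem_filter, Finset.mem_univ, true_and, Finset.mem_singleton]
    constructor
    · intro hv
      have : e = d := eq_of_vertex_fixed hd hv
      rw [this]
    · intro hq
      rw [hq]
  -- fiber over a crossing
  have fib_cross : ∀ d : U.D, U.σ d ≠ d →
      (Finset.univ.filter (fun q => g q = U.vertexOf d)).card = 2 := by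
    intro d hd
    -- choose the dart x in the orbit with col x = b x
    obtain ⟨x, hx_col, hx_v, hx_ne⟩ :
        ∃ x, U.col x = T.b x ∧ U.vertexOf x = U.vertexOf d ∧ U.σ x ≠ x := by
      by_cases hc : U.col d = T.b d
      · exact ⟨d, hc, rfl, hd⟩
      · refine ⟨U.σ d, ?_, vertexOf_sigma d, sigma_ne_of_vertex hd (vertexOf_sigma d)⟩
        rw [U.col_alt d hd, b_sigma T d]
        cases hce : U.col d <;> cases hbe : T.b d <;> simp_all
    have hx2_ne : U.σ (U.σ x) ≠ U.σ x := sigma_ne_of_vertex hx_ne (vertexOf_sigma x)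
    have hmk1 : Quot.mk (pstep (tperm T)) (U.σ x) = Quot.mk _ x := by
      refine (Quot.sound ?_).symm
      show U.trans T.b x = U.σ x
      exact trans_of_col_eq T hx_col
    have hcol2 : U.col (U.σ (U.σ x)) = T.b (U.σ (U.σ x)) := by
      rw [col2 hx_ne, b_sigma, b_sigma, hx_col]
    have hmk3 : Quot.mk (pstep (tperm T)) (U.σ (U.σ (U.σ x))) = Quot.mk _ (U.σ (U.σ x)) := by
      refine (Quot.sound ?_).symm
      show U.trans T.b (U.σ (U.σ x)) = U.σ (U.σ (U.σ x))
      exact trans_of_col_eq T hcol2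
    have hset : Finset.univ.filter (fun q => g q = U.vertexOf d)
        = {Quot.mk _ x, Quot.mk _ (U.σ (U.σ x))} := by
      ext q
      induction q using Quot.ind with | _ e =>
      simp only [Finset.mem_filter, Finset.mem_univ, true_and, Finset.mem_insert,
        Finset.mem_singleton]
      constructor
      · intro hv
        have hvx : U.vertexOf e = U.vertexOf x := by
          rw [hx_v]
          exact hv
        rcases orbit_mem hx_ne hvx with rfl | rfl | rfl | rfl
        · left; rfl
        · left; exact hmk1
        · right; rfl
        · right; exact hmk3
      · intro hq
        rcases hq with hq | hq <;> rw [hq]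
        · show U.vertexOf x = U.vertexOf d
          exact hx_v
        · show U.vertexOf (U.σ (U.σ x)) = U.vertexOf d
          rw [vertexOf_sigma, vertexOf_sigma, hx_v]
    have hne_mk : Quot.mk (pstep (tperm T)) x ≠ Quot.mk _ (U.σ (U.σ x)) := by
      intro h
      have hsc : (tperm T).SameCycle x (U.σ (U.σ x)) :=
        (eqvGen_pstep_iff_sameCycle _ _ _).mp (Quot.eqvGen_exact h)
      obtain ⟨n, hn⟩ := sameCycle_nat _ hsc
      have hper : ((tperm T) ^ 2) x = x := by
        rw [pow2_apply]
        exact trans_invol T x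
      rw [pow_mod_point (tperm T) x (by norm_num) hper n] at hn
      have h2 : n % 2 = 0 ∨ n % 2 = 1 := by omega
      rcases h2 with h2 | h2 <;> rw [h2] at hn
      · rw [pow_zero] at hn
        have hxx : x = U.σ (U.σ x) := by simpa using hn
        exact ne2 hx_ne hxx.symm
      · rw [pow_one] at hn
        have hh : U.trans T.b x = U.σ (U.σ x) := hn
        rw [trans_of_col_eq T hx_col] at hh
        exact hx_ne (U.σ.injective hh).symm
    rw [hset, Finset.card_insert_of_notMem (by simpa using hne_mk), Finset.card_singleton]
  -- assemble the sum
  have hA : ({U.vertexOf U.tail, U.vertexOf U.head} : Finset U.Vertex) ⊆ Finset.univ :=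
    Finset.subset_univ _
  have hsplit := Finset.sum_sdiff (f := fun v : U.Vertex =>
    (Finset.univ.filter (fun q : Quot (pstep (tperm T)) => g q = v)).card) hA
  have hsumA : ∑ v ∈ ({U.vertexOf U.tail, U.vertexOf U.head} : Finset U.Vertex),
      (Finset.univ.filter (fun q : Quot (pstep (tperm T)) => g q = v)).card = 2 := by
    rw [Finset.sum_insert (by simpa using vt_ne_vh), Finset.sum_singleton,
      fib_fix U.tail U.σ_tail, fib_fix U.head U.σ_head]
    simp
  have hsumB : ∑ v ∈ (Finset.univ \ {U.vertexOf U.tail, U.vertexOf U.head} : Finset U.Vertex),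
      (Finset.univ.filter (fun q : Quot (pstep (tperm T)) => g q = v)).card
      = 2 * Nat.card U.Crossing := by
    have hcongr : ∀ v ∈ (Finset.univ \ {U.vertexOf U.tail, U.vertexOf U.head} : Finset U.Vertex),
        (Finset.univ.filter (fun q : Quot (pstep (tperm T)) => g q = v)).card = 2 := by
      intro v hv
      simp only [Finset.mem_sdiff, Finset.mem_univ, true_and, Finset.mem_insert,
        Finset.mem_singleton, not_or] at hv
      obtain ⟨d, hd⟩ := Quot.exists_rep v
      have hvd : U.vertexOf d = v := hd
      have hσd : U.σ d ≠ d := by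
        intro hfix
        rcases U.endpoints_only d hfix with rfl | rfl
        · exact hv.1 hvd.symm
        · exact hv.2 hvd.symm
      rw [← hvd]
      exact fib_cross d hσd
    rw [Finset.sum_congr rfl hcongr, Finset.sum_const, smul_eq_mul,
      Finset.card_sdiff_of_subset hA,
      Finset.card_insert_of_notMem (by simpa using vt_ne_vh), Finset.card_singleton]
    have hV : (Finset.univ : Finset U.Vertex).card = Nat.card U.Vertex := by
      rw [Nat.card_eq_fintype_card]; rfl
    rw [hV, card_vertex]
    omega
  have hQsum : Nat.card (Quot (pstep (tperm T)))
      = ∑ v ∈ (Finset.univ : Finset U.Vertex),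
        (Finset.univ.filter (fun q : Quot (pstep (tperm T)) => g q = v)).card := by
    rw [Nat.card_eq_fintype_card]
    exact key
  rw [hQsum, ← hsplit, hsumA, hsumB]

end TrailLemmas

lemma card_face : Nat.card U.Face = Nat.card U.Crossing + 1 := by
  have he := U.euler
  have h1 : orbCount ⇑U.σ = Nat.card U.Vertex := rfl
  have h2 : orbCount (⇑U.σ ∘ U.α) = Nat.card U.Face := rfl
  rw [h1, h2, card_darts, card_vertex] at he
  omega

lemma faceOf_step (e : U.D) : U.faceOf (U.σ (U.α e)) = U.faceOf e :=
  (@Quot.sound U.D (fun a b => U.σ (U.α a) = b) e (U.σ (U.α e)) rfl).symm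

lemma one_orbit (T : U.Trail) :
    ∀ e e' : U.D, Relation.EqvGen (fun a c => U.trans T.b (U.α a) = c) e e' := by
  classical
  have hfil : (Finset.univ.filter fun x : U.D =>
      (Function.Involutive.toPerm _ U.α_invol) x ≠ x) = Finset.univ := by
    ext x
    simp only [Finset.mem_filter, Finset.mem_univ, true_and, iff_true]
    exact U.α_ne x
  have hkey := key_ineq (Fintype.card U.D) (tperm T) (Function.Involutive.toPerm _ U.α_invol)
    U.α_invol (by rw [hfil]; rfl)
  have hcomp : Nat.card (Quot (crel (tperm T) (Function.Involutive.toPerm _ U.α_invol))) = 1 := by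
    rw [Nat.card_eq_one_iff_unique]
    refine ⟨⟨?_⟩, ⟨Quot.mk _ U.tail⟩⟩
    intro q q'
    induction q using Quot.ind with | _ e =>
    induction q' using Quot.ind with | _ e' =>
    apply Quot.eqvGen_sound
    refine eqvGen_bind ?_ (T.conn e e')
    intro x y hxy
    rcases hxy with hxy | hxy
    · exact Relation.EqvGen.rel _ _ (Or.inr hxy)
    · exact Relation.EqvGen.rel _ _ (Or.inl hxy)
  have htau := card_tau_orbits T
  have hD := card_darts (U := U)
  rw [hcomp, htau, hD] at hkey
  have hpos : 0 < Nat.card (Quot (pstep (tperm T * Function.Involutive.toPerm _ U.α_invol))) := by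
    have : Nonempty (Quot (pstep (tperm T * Function.Involutive.toPerm _ U.α_invol))) :=
      ⟨Quot.mk _ U.tail⟩
    exact Nat.card_pos
  have hone : Nat.card (Quot (pstep (tperm T * Function.Involutive.toPerm _ U.α_invol))) = 1 := by
    omega
  have hsub : Subsingleton (Quot (pstep (tperm T * Function.Involutive.toPerm _ U.α_invol))) :=
    (Nat.card_eq_one_iff_unique.mp hone).1
  intro e e'
  have hq : Quot.mk (pstep (tperm T * Function.Involutive.toPerm _ U.α_invol)) e
      = Quot.mk _ e' := Subsingleton.elim _ _
  refine eqvGen_bind ?_ (Quot.eqvGen_exact hq)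
  intro x y hxy
  exact Relation.EqvGen.rel _ _ (hxy : U.trans T.b (U.α x) = y)

section Starred

variable {S : StarredLinkoid}

instance instFinBFace : Finite S.BFace := by
  unfold StarredLinkoid.BFace; infer_instance

lemma card_bface : Nat.card S.BFace = Nat.card S.Crossing := by
  classical
  have e1 : {f : S.Face // f = S.outerFace} ⊕ S.BFace ≃ S.Face :=
    Equiv.sumCompl (fun f : S.Face => f = S.outerFace)
  have hsum : Nat.card S.Face
      = Nat.card {f : S.Face // f = S.outerFace} + Nat.card S.BFace := by
    rw [← Nat.card_congr e1, Nat.card_sum]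
  have hone : Nat.card {f : S.Face // f = S.outerFace} = 1 := by
    rw [Nat.card_eq_one_iff_unique]
    refine ⟨⟨?_⟩, ⟨⟨S.outerFace, rfl⟩⟩⟩
    rintro ⟨x, hx⟩ ⟨y, hy⟩
    exact Subtype.ext (hx.trans hy.symm)
  have hface := card_face (U := S.toLinkoidUniverse)
  omega

end Starred

/-- chains of a given length in a relation, ending at a root -/
def chainTo {Y : Type} (R : Y → Y → Prop) (root : Y) : ℕ → Y → Prop
  | 0, f => f = root
  | n+1, f => ∃ g, R f g ∧ chainTo R root n g

lemma chainTo_exists {Y : Type} {R : Y → Y → Prop} {root f : Y}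
    (h : Relation.ReflTransGen R f root) : ∃ n, chainTo R root n f := by
  induction h using Relation.ReflTransGen.head_induction_on with
  | refl => exact ⟨0, rfl⟩
  | head hab _ ih =>
    obtain ⟨n, hn⟩ := ih
    exact ⟨n+1, _, hab, hn⟩

end LKApp


open LKApp LKAux in
/-- every trail of a starred 1-linkoid universe determines a spanning tree
of the dual graph rooted at the starred (unbounded) face: a parent map on bounded
faces together with a bijection with the crossings such that the tree edge of each
bounded face passes through its smoothed crossing site (it joins the two faces merged
by the smoothing there), and following parents from any face reaches the outer face. -/
theorem trail_gives_dual_spanning_tree (U : StarredLinkoid) (T : U.Trail) :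
    ∃ (par : U.BFace → U.Face) (cr : U.BFace ≃ U.Crossing),
      (∀ f : U.BFace, U.MergesAt T.b (cr f).1 f.1 (par f)) ∧
      (∀ f0 : U.Face,
        Relation.ReflTransGen (fun x y => ∃ bf : U.BFace, bf.1 = x ∧ par bf = y)
          f0 U.outerFace) := by
  classical
  -- the merge relation on faces determined by the smoothing
  set Rel : U.Face → U.Face → Prop := fun f g =>
    ∃ x, U.σ x ≠ x ∧ ¬ U.col x = T.b x ∧ f = U.faceOf (U.σ x) ∧
      g = U.faceOf (U.σ (U.σ (U.σ x))) with hRel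
  have hRelSymm : ∀ f g, Rel f g → Rel g f := by
    rintro f g ⟨x, hx, hcol, hf, hg⟩
    have hσ1 : U.σ (U.σ x) ≠ U.σ x := sigma_ne_of_vertex hx (vertexOf_sigma x)
    have hσ2 : U.σ (U.σ (U.σ x)) ≠ U.σ (U.σ x) :=
      sigma_ne_of_vertex hx (by rw [vertexOf_sigma, vertexOf_sigma])
    refine ⟨U.σ (U.σ x), hσ2, ?_, ?_, ?_⟩
    · rw [col2 hx, b_sigma, b_sigma]; exact hcol
    · exact hg
    · have h5 : U.σ (U.σ (U.σ (U.σ (U.σ x)))) = U.σ x := pow4 hσ1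
      rw [h5]; exact hf
  -- connection of faces through smoothed transitions
  have conn_step : ∀ e : U.D, U.faceOf (U.trans T.b (U.α e)) = U.faceOf e ∨
      Rel (U.faceOf e) (U.faceOf (U.trans T.b (U.α e))) := by
    intro e
    by_cases hfix : U.σ (U.α e) = U.α e
    · left
      have h1 : U.trans T.b (U.α e) = U.α e := by
        unfold LinkoidUniverse.trans
        by_cases hc : U.col (U.α e) = T.b (U.α e)
        · rw [if_pos hc, hfix]
        · rw [if_neg hc]
          conv_lhs => rw [← hfix]
          rw [U.σ.symm_apply_apply]
      rw [h1, ← faceOf_step e, hfix]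
    · by_cases hc : U.col (U.α e) = T.b (U.α e)
      · left
        rw [trans_of_col_eq T hc, faceOf_step e]
      · right
        refine ⟨U.α e, hfix, hc, (faceOf_step e).symm, ?_⟩
        rw [trans_of_col_ne T hc, symm_eq_three hfix]
  have conn_faces : ∀ e e' : U.D, Relation.EqvGen Rel (U.faceOf e) (U.faceOf e') := by
    intro e e'
    have h := one_orbit T e e'
    induction h with
    | rel a c hac =>
      rcases conn_step a with h1 | h1
      · rw [← hac, h1]; exact Relation.EqvGen.refl _
      · rw [← hac]; exact Relation.EqvGen.rel _ _ h1
    | refl a => exact Relation.EqvGen.refl _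
    | symm a c _ ih => exact Relation.EqvGen.symm _ _ ih
    | trans a c d _ _ ih1 ih2 => exact Relation.EqvGen.trans _ _ _ ih1 ih2
  have eqv_to_rtg : ∀ {a b : U.Face}, Relation.EqvGen Rel a b →
      Relation.ReflTransGen Rel a b := by
    intro a b h
    induction h with
    | rel x y hxy => exact Relation.ReflTransGen.single hxy
    | refl x => exact Relation.ReflTransGen.refl
    | symm x y hxy ih =>
      clear hxy
      induction ih with
      | refl => exact Relation.ReflTransGen.refl
      | tail _ hbc ih2 => exact Relation.ReflTransGen.head (hRelSymm _ _ hbc) ih2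
    | trans x y z _ _ ih1 ih2 => exact ih1.trans ih2
  have hrtg : ∀ f : U.Face, Relation.ReflTransGen Rel f U.outerFace := by
    intro f
    induction f using Quot.ind with | _ e =>
    exact eqv_to_rtg (conn_faces e U.star)
  have hex : ∀ f : U.Face, ∃ n, chainTo Rel U.outerFace n f :=
    fun f => chainTo_exists (hrtg f)
  set dis : U.Face → ℕ := fun f => Nat.find (hex f) with hdisdef
  have dis_spec : ∀ f, chainTo Rel U.outerFace (dis f) f := fun f => Nat.find_spec (hex f)
  have dis_le : ∀ f m, chainTo Rel U.outerFace m f → dis f ≤ m :=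
    fun f m h => Nat.find_min' (hex f) h
  have parspec : ∀ f : U.BFace, ∃ p : U.Face × U.D,
      U.σ p.2 ≠ p.2 ∧ ¬ U.col p.2 = T.b p.2 ∧ f.1 = U.faceOf (U.σ p.2) ∧
      p.1 = U.faceOf (U.σ (U.σ (U.σ p.2))) ∧ dis p.1 < dis f.1 := by
    intro f
    have h0 : dis f.1 ≠ 0 := by
      intro h0
      have hcc := dis_spec f.1
      rw [h0] at hcc
      exact f.2 hcc
    obtain ⟨m, hm⟩ := Nat.exists_eq_succ_of_ne_zero h0
    have hc := dis_spec f.1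
    rw [hm] at hc
    obtain ⟨g, hRg, hcm⟩ := hc
    obtain ⟨x, hx1, hx2, hx3, hx4⟩ := hRg
    exact ⟨(g, x), hx1, hx2, hx3, hx4, lt_of_le_of_lt (dis_le g m hcm) (by omega)⟩
  set pdata : ∀ f : U.BFace, U.Face × U.D := fun f => Classical.choose (parspec f) with hpdata
  set par : U.BFace → U.Face := fun f => (pdata f).1 with hpar
  set crD : U.BFace → U.D := fun f => (pdata f).2 with hcrD
  have pspec := fun f => Classical.choose_spec (parspec f)
  have hσx : ∀ f, U.σ (crD f) ≠ crD f := fun f => (pspec f).1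
  have hcolx : ∀ f, ¬ U.col (crD f) = T.b (crD f) := fun f => (pspec f).2.1
  have hface1 : ∀ f, f.1 = U.faceOf (U.σ (crD f)) := fun f => (pspec f).2.2.1
  have hface2 : ∀ f, par f = U.faceOf (U.σ (U.σ (U.σ (crD f)))) := fun f => (pspec f).2.2.2.1
  have hdis : ∀ f, dis (par f) < dis f.1 := fun f => (pspec f).2.2.2.2
  set cr0 : U.BFace → U.Crossing := fun f =>
    ⟨U.vertexOf (crD f), crossing_vertex (hσx f)⟩ with hcr0
  have hmerge : ∀ f : U.BFace, U.MergesAt T.b (cr0 f).1 f.1 (par f) := by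
    intro f
    by_cases hb : T.b (crD f) = true
    · refine ⟨U.σ (crD f), vertexOf_sigma (crD f),
        sigma_ne_of_vertex (hσx f) (vertexOf_sigma _), ?_⟩
      rw [if_pos (show (T.b (U.σ (crD f)) = true) from by rw [b_sigma]; exact hb)]
      have hp2 : (U.σ ^ 2) (U.σ (crD f)) = U.σ (U.σ (U.σ (crD f))) := pow2_apply _ _
      rw [hp2, hface1 f, hface2 f]
    · have hbf : ¬ (T.b (crD f) = true) := hb
      refine ⟨crD f, rfl, hσx f, ?_⟩
      rw [if_neg hbf]
      have hp3 : (U.σ ^ 3) (crD f) = U.σ (U.σ (U.σ (crD f))) := pow3_apply _ _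
      rw [hp3, hface1 f, hface2 f]
  have hinj : Function.Injective cr0 := by
    intro f1 f2 hcr
    have hv : U.vertexOf (crD f1) = U.vertexOf (crD f2) := congrArg Subtype.val hcr
    have horb := orbit_mem (hσx f1) hv.symm
    rcases horb with he | he | he | he
    · apply Subtype.ext
      rw [hface1 f1, hface1 f2, he]
    · exfalso
      have h1 := hcolx f1
      have h2 := hcolx f2
      rw [he, U.col_alt _ (hσx f1), b_sigma] at h2
      cases hc : U.col (crD f1) <;> cases hbb : T.b (crD f1) <;> rw [hc, hbb] at h1 h2 <;>
        revert h1 h2 <;> decide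
    · exfalso
      have e1 : f2.1 = par f1 := by
        rw [hface1 f2, he, hface2 f1]
      have e2 : par f2 = f1.1 := by
        rw [hface2 f2, he, hface1 f1]
        have h5 : U.σ (U.σ (U.σ (U.σ (U.σ (crD f1))))) = U.σ (crD f1) :=
          pow4 (sigma_ne_of_vertex (hσx f1) (vertexOf_sigma _))
        rw [h5]
      have d1 := hdis f1
      have d2 := hdis f2
      rw [e1, e2] at d2
      omega
    · exfalso
      have h1 := hcolx f1
      have h2 := hcolx f2
      have hσ2 : U.σ (U.σ (U.σ (crD f1))) ≠ U.σ (U.σ (crD f1)) :=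
        sigma_ne_of_vertex (hσx f1) (by rw [vertexOf_sigma, vertexOf_sigma])
      rw [he, U.col_alt _ hσ2, col2 (hσx f1), b_sigma, b_sigma, b_sigma] at h2
      cases hc : U.col (crD f1) <;> cases hbb : T.b (crD f1) <;> rw [hc, hbb] at h1 h2 <;>
        revert h1 h2 <;> decide
  have hcard : Nat.card U.BFace = Nat.card U.Crossing := card_bface
  have hbij : Function.Bijective cr0 :=
    (Nat.bijective_iff_injective_and_card cr0).mpr ⟨hinj, hcard⟩
  refine ⟨par, Equiv.ofBijective cr0 hbij, fun f => hmerge f, ?_⟩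
  have main : ∀ n (f0 : U.Face), dis f0 ≤ n →
      Relation.ReflTransGen (fun x y => ∃ bf : U.BFace, bf.1 = x ∧ par bf = y)
        f0 U.outerFace := by
    intro n
    induction n with
    | zero =>
      intro f0 h0
      have h := dis_spec f0
      rw [Nat.le_zero.mp h0] at h
      have h' : f0 = U.outerFace := h
      rw [h']
    | succ n ih =>
      intro f0 h0
      by_cases hout : f0 = U.outerFace
      · rw [hout]
      · have hlt : dis (par ⟨f0, hout⟩) < dis f0 := hdis ⟨f0, hout⟩
        exact Relation.ReflTransGen.head ⟨⟨f0, hout⟩, rfl, rfl⟩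
          (ih (par ⟨f0, hout⟩) (by omega))
  intro f0
  exact main (dis f0) f0 le_rfl
end
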